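/- arXiv:1306.6012 — 8 statements merged into one kernel-verified Lean document; each statement's English description precedes it below -/
import Mathlib

section
/- The multiplicities μ₁, μ₂, μ₃ of the two-dimensional fundamental parallelepipeds ◊(w₂,w₃), ◊(w₁,w₃), ◊(w₁,w₂) all divide the multiplicity μ of the three-dimensional fundamental parallelepiped ◊(w₁,w₂,w₃). -/
noncomputable section

/-- The coercion of an integer vector in `ℤ³` to `ℝ³`. -/
def coe3 (v : Fin 3 → ℤ) : Fin 3 → ℝ := fun i => (v i : ℝ)

/-- A vector of `ℤ³` is primitive if the greatest common divisor of its components is 1. -/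
def IsPrimitive (v : Fin 3 → ℤ) : Prop := Int.gcd (v 0) (Int.gcd (v 1) (v 2)) = 1

/-- The fundamental parallelepiped spanned by two vectors:
`◊(a,b) = {s•a + t•b : s,t ∈ [0,1)}`. -/
def para2 (a b : Fin 3 → ℝ) : Set (Fin 3 → ℝ) :=
  {x | ∃ s t : ℝ, 0 ≤ s ∧ s < 1 ∧ 0 ≤ t ∧ t < 1 ∧ x = s • a + t • b}

/-- The fundamental parallelepiped spanned by three vectors:
`◊(a,b,c) = {s•a + t•b + u•c : s,t,u ∈ [0,1)}`. -/
def para3 (a b c : Fin 3 → ℝ) : Set (Fin 3 → ℝ) :=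
  {x | ∃ s t u : ℝ, 0 ≤ s ∧ s < 1 ∧ 0 ≤ t ∧ t < 1 ∧ 0 ≤ u ∧ u < 1 ∧
    x = s • a + t • b + u • c}

/-- The integral points `ℤ³ ∩ ◊(a,b)` of a two-dimensional fundamental parallelepiped. -/
def H2pts (a b : Fin 3 → ℤ) : Set (Fin 3 → ℤ) := {x | coe3 x ∈ para2 (coe3 a) (coe3 b)}

/-- The integral points `ℤ³ ∩ ◊(a,b,c)` of a three-dimensional fundamental parallelepiped. -/
def H3pts (a b c : Fin 3 → ℤ) : Set (Fin 3 → ℤ) :=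
  {x | coe3 x ∈ para3 (coe3 a) (coe3 b) (coe3 c)}

/-!
The integral points of `◊(w₁,w₂,w₃)` represent each class of `ℤ³` modulo the lattice
`L = ℤw₁ + ℤw₂ + ℤw₃` exactly once (reduce the real coordinates in the basis `w₁,w₂,w₃`
modulo 1), so `μ = #(ℤ³/L)`. The same reduction shows that the integral points of `◊(w₂,w₃)`
represent, each once, the classes of the integral points of the plane `ℝw₂ + ℝw₃`; these
classes form a subgroup of `ℤ³/L`, so Lagrange's theorem gives `μ₁ ∣ μ`. Permuting the `wᵢ`
gives the other two divisibilities.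
-/

open Set Submodule

lemma LinearIndependent.triple_iff {R M : Type*} [Ring R] [AddCommGroup M] [Module R M]
    {x y z : M} :
    LinearIndependent R ![x, y, z] ↔
      ∀ s t u : R, s • x + t • y + u • z = 0 → s = 0 ∧ t = 0 ∧ u = 0 := by
  simp_rw [Fintype.linearIndependent_iff, Fin.sum_univ_three]
  refine ⟨fun h s t u hstu => ?_, fun h g hg i => ?_⟩
  · have hzero := h ![s, t, u] hstu
    exact ⟨hzero 0, hzero 1, hzero 2⟩
  · obtain ⟨h₀, h₁, h₂⟩ := h _ _ _ hg
    fin_cases i <;> assumption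

lemma LinearIndependent.swap_fin3 {R M : Type*} [Ring R] [AddCommGroup M] [Module R M]
    {x y z : M} (h : LinearIndependent R ![x, y, z]) : LinearIndependent R ![y, x, z] := by
  rw [LinearIndependent.triple_iff] at h ⊢
  intro s t u hstu
  obtain ⟨ht, hs, hu⟩ := h t s u (by rw [← hstu]; abel)
  exact ⟨hs, ht, hu⟩

lemma LinearIndependent.rotate_fin3 {R M : Type*} [Ring R] [AddCommGroup M] [Module R M]
    {x y z : M} (h : LinearIndependent R ![x, y, z]) : LinearIndependent R ![z, x, y] := by
  rw [LinearIndependent.triple_iff] at h ⊢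
  intro s t u hstu
  obtain ⟨ht, hu, hs⟩ := h t u s (by rw [← hstu]; abel)
  exact ⟨hs, ht, hu⟩

lemma LinearIndependent.exists_smul_add_smul_add_smul_eq {K V : Type*} [DivisionRing K]
    [AddCommGroup V] [Module K V] [FiniteDimensional K V] {x y z : V}
    (h : LinearIndependent K ![x, y, z]) (hV : Module.finrank K V = 3) (v : V) :
    ∃ r s t : K, r • x + s • y + t • z = v := by
  have htop := h.span_eq_top_of_card_eq_finrank' (by simp [hV])
  rw [Matrix.range_cons, Matrix.range_cons, Matrix.range_cons, Matrix.range_empty] at htop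
  simp only [Set.union_empty, Set.singleton_union] at htop
  exact mem_span_triple.mp (htop ▸ mem_top)

theorem AddSubgroup.ncard_dvd_ncard_of_transversal {G : Type*} [AddCommGroup G]
    {L M : AddSubgroup G} {P Q : Set G} (hQP : Q ⊆ P)
    (hP_inj : ∀ x ∈ P, ∀ y ∈ P, x - y ∈ L → x = y) (hP : ∀ g, ∃ p ∈ P, g - p ∈ L)
    (hQM : Q ⊆ M) (hQ : ∀ m ∈ M, ∃ q ∈ Q, m - q ∈ L) :
    Q.ncard ∣ P.ncard := by
  set π := QuotientAddGroup.mk' L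
  have hinj : InjOn π P := fun x hx y hy h =>
    hP_inj x hx y hy (QuotientAddGroup.eq_iff_sub_mem.mp h)
  have himP : π '' P = univ := by
    refine eq_univ_of_forall fun g => ?_
    obtain ⟨g, rfl⟩ := QuotientAddGroup.mk'_surjective L g
    obtain ⟨p, hp, hgp⟩ := hP g
    exact ⟨p, hp, (QuotientAddGroup.eq_iff_sub_mem.mpr hgp).symm⟩
  have himQ : π '' Q = M.map π := by
    refine (image_mono hQM).antisymm ?_
    rintro _ ⟨m, hm, rfl⟩
    obtain ⟨q, hq, hmq⟩ := hQ m hm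
    exact ⟨q, hq, (QuotientAddGroup.eq_iff_sub_mem.mpr hmq).symm⟩
  calc Q.ncard = Nat.card (M.map π) := by
        rw [← (hinj.mono hQP).ncard_image, himQ]; exact (Nat.card_coe_set_eq _).symm
    _ ∣ Nat.card (G ⧸ L) := AddSubgroup.card_addSubgroup_dvd_card _
    _ = P.ncard := by rw [← hinj.ncard_image, himP, ncard_univ]

lemma Int.eq_zero_of_cast_eq_sub_of_mem_Ico {n : ℤ} {s s' : ℝ} (hs : s ∈ Ico 0 1)
    (hs' : s' ∈ Ico 0 1) (h : (n : ℝ) = s - s') : n = 0 := by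
  have h₁ : (-1 : ℝ) < n := by linarith [hs.1, hs'.2]
  have h₂ : (n : ℝ) < 1 := by linarith [hs.2, hs'.1]
  have : -1 < n ∧ n < 1 := ⟨by exact_mod_cast h₁, by exact_mod_cast h₂⟩
  omega

def coe3Hom : (Fin 3 → ℤ) →+ (Fin 3 → ℝ) := (Int.castAddHom ℝ).compLeft (Fin 3)

lemma coe3_sub (x y : Fin 3 → ℤ) : coe3 (x - y) = coe3 x - coe3 y := map_sub coe3Hom x y

lemma coe3_smul_add_smul_add_smul (a b c : Fin 3 → ℤ) (r s t : ℤ) :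
    coe3 (r • a + s • b + t • c) = (r : ℝ) • coe3 a + (s : ℝ) • coe3 b + (t : ℝ) • coe3 c := by
  funext i; simp [coe3]

lemma coe3_sub_floor_smul {a b c z : Fin 3 → ℤ} {r s t : ℝ}
    (hz : coe3 z = r • coe3 a + s • coe3 b + t • coe3 c) :
    coe3 (z - (⌊r⌋ • a + ⌊s⌋ • b + ⌊t⌋ • c)) =
      Int.fract r • coe3 a + Int.fract s • coe3 b + Int.fract t • coe3 c := by
  rw [coe3_sub, coe3_smul_add_smul_add_smul, hz]
  simp only [Int.fract]
  module

def planeIntPoints (b c : Fin 3 → ℤ) : AddSubgroup (Fin 3 → ℤ) :=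
  (span ℝ {coe3 b, coe3 c}).toAddSubgroup.comap coe3Hom

lemma mem_planeIntPoints {b c x : Fin 3 → ℤ} :
    x ∈ planeIntPoints b c ↔ ∃ s t : ℝ, s • coe3 b + t • coe3 c = coe3 x :=
  mem_span_pair

lemma H2pts_subset_planeIntPoints (b c : Fin 3 → ℤ) : H2pts b c ⊆ planeIntPoints b c := by
  rintro x ⟨s, t, -, -, -, -, hx⟩
  exact mem_planeIntPoints.mpr ⟨s, t, hx.symm⟩

lemma H2pts_subset_H3pts (a b c : Fin 3 → ℤ) : H2pts b c ⊆ H3pts a b c := by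
  rintro x ⟨s, t, hs0, hs1, ht0, ht1, hx⟩
  exact ⟨0, s, t, le_rfl, one_pos, hs0, hs1, ht0, ht1, by rw [hx, zero_smul, zero_add]⟩

lemma H3pts_swap (a b c : Fin 3 → ℤ) : H3pts b a c = H3pts a b c := by
  ext x
  constructor <;> rintro ⟨s, t, u, h1, h2, h3, h4, h5, h6, hx⟩ <;>
    exact ⟨t, s, u, h3, h4, h1, h2, h5, h6, by rw [hx]; abel⟩

lemma H3pts_rotate (a b c : Fin 3 → ℤ) : H3pts c a b = H3pts a b c := by
  ext x
  constructor
  · rintro ⟨s, t, u, h1, h2, h3, h4, h5, h6, hx⟩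
    exact ⟨t, u, s, h3, h4, h5, h6, h1, h2, by rw [hx]; abel⟩
  · rintro ⟨s, t, u, h1, h2, h3, h4, h5, h6, hx⟩
    exact ⟨u, s, t, h5, h6, h1, h2, h3, h4, by rw [hx]; abel⟩

lemma eq_of_mem_H3pts_of_sub_mem_span {a b c x y : Fin 3 → ℤ}
    (hli : LinearIndependent ℝ ![coe3 a, coe3 b, coe3 c]) (hx : x ∈ H3pts a b c)
    (hy : y ∈ H3pts a b c) (hxy : x - y ∈ span ℤ {a, b, c}) : x = y := by
  obtain ⟨s, t, u, hs0, hs1, ht0, ht1, hu0, hu1, hx⟩ := hx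
  obtain ⟨s', t', u', hs0', hs1', ht0', ht1', hu0', hu1', hy⟩ := hy
  obtain ⟨n₀, n₁, n₂, hn⟩ := mem_span_triple.mp hxy
  have hcoe := congrArg coe3 hn
  rw [coe3_smul_add_smul_add_smul, coe3_sub, hx, hy] at hcoe
  obtain ⟨h₀, h₁, h₂⟩ := LinearIndependent.triple_iff.mp hli (n₀ - (s - s')) (n₁ - (t - t'))
    (n₂ - (u - u')) (by linear_combination (norm := module) hcoe)
  have e₀ := Int.eq_zero_of_cast_eq_sub_of_mem_Ico ⟨hs0, hs1⟩ ⟨hs0', hs1'⟩ (sub_eq_zero.mp h₀)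
  have e₁ := Int.eq_zero_of_cast_eq_sub_of_mem_Ico ⟨ht0, ht1⟩ ⟨ht0', ht1'⟩ (sub_eq_zero.mp h₁)
  have e₂ := Int.eq_zero_of_cast_eq_sub_of_mem_Ico ⟨hu0, hu1⟩ ⟨hu0', hu1'⟩ (sub_eq_zero.mp h₂)
  rw [e₀, e₁, e₂] at hn
  simpa [sub_eq_zero, eq_comm] using hn

lemma exists_mem_H3pts_sub_mem_span {a b c : Fin 3 → ℤ}
    (hli : LinearIndependent ℝ ![coe3 a, coe3 b, coe3 c]) (z : Fin 3 → ℤ) :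
    ∃ p ∈ H3pts a b c, z - p ∈ span ℤ {a, b, c} := by
  obtain ⟨r, s, t, hz⟩ := hli.exists_smul_add_smul_add_smul_eq (by simp) (coe3 z)
  refine ⟨z - (⌊r⌋ • a + ⌊s⌋ • b + ⌊t⌋ • c), ?_, ?_⟩
  · exact ⟨Int.fract r, Int.fract s, Int.fract t, Int.fract_nonneg _, Int.fract_lt_one _,
      Int.fract_nonneg _, Int.fract_lt_one _, Int.fract_nonneg _, Int.fract_lt_one _,
      coe3_sub_floor_smul hz.symm⟩
  · rw [sub_sub_cancel]
    exact mem_span_triple.mpr ⟨_, _, _, rfl⟩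

lemma exists_mem_H2pts_sub_mem_span (a : Fin 3 → ℤ) {b c x : Fin 3 → ℤ}
    (hx : x ∈ planeIntPoints b c) : ∃ q ∈ H2pts b c, x - q ∈ span ℤ {a, b, c} := by
  obtain ⟨s, t, hst⟩ := mem_planeIntPoints.mp hx
  have hx' : coe3 x = (0 : ℝ) • coe3 a + s • coe3 b + t • coe3 c := by
    rw [← hst, zero_smul, zero_add]
  refine ⟨x - (⌊(0 : ℝ)⌋ • a + ⌊s⌋ • b + ⌊t⌋ • c), ?_, ?_⟩
  · refine ⟨Int.fract s, Int.fract t, Int.fract_nonneg _, Int.fract_lt_one _,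
      Int.fract_nonneg _, Int.fract_lt_one _, ?_⟩
    rw [coe3_sub_floor_smul hx', Int.fract_zero, zero_smul, zero_add]
  · rw [sub_sub_cancel]
    exact mem_span_triple.mpr ⟨_, _, _, rfl⟩

theorem ncard_H2pts_dvd_ncard_H3pts {a b c : Fin 3 → ℤ}
    (hli : LinearIndependent ℝ ![coe3 a, coe3 b, coe3 c]) :
    (H2pts b c).ncard ∣ (H3pts a b c).ncard :=
  AddSubgroup.ncard_dvd_ncard_of_transversal (L := (span ℤ {a, b, c}).toAddSubgroup)
    (H2pts_subset_H3pts a b c) (fun _ hx _ hy => eq_of_mem_H3pts_of_sub_mem_span hli hx hy)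
    (exists_mem_H3pts_sub_mem_span hli) (H2pts_subset_planeIntPoints b c)
    (fun _ => exists_mem_H2pts_sub_mem_span a)

theorem multiplicities_divide_general (w₁ w₂ w₃ : Fin 3 → ℤ)
    (hli : LinearIndependent ℝ ![coe3 w₁, coe3 w₂, coe3 w₃]) :
    (H2pts w₂ w₃).ncard ∣ (H3pts w₁ w₂ w₃).ncard ∧
    (H2pts w₁ w₃).ncard ∣ (H3pts w₁ w₂ w₃).ncard ∧
    (H2pts w₁ w₂).ncard ∣ (H3pts w₁ w₂ w₃).ncard :=
  ⟨ncard_H2pts_dvd_ncard_H3pts hli,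
    H3pts_swap w₁ w₂ w₃ ▸ ncard_H2pts_dvd_ncard_H3pts hli.swap_fin3,
    H3pts_rotate w₁ w₂ w₃ ▸ ncard_H2pts_dvd_ncard_H3pts hli.rotate_fin3⟩

/-- The multiplicities `μ₁, μ₂, μ₃` of the two-dimensional fundamental
parallelepipeds `◊(w₂,w₃), ◊(w₁,w₃), ◊(w₁,w₂)` all divide the multiplicity `μ` of the
three-dimensional fundamental parallelepiped `◊(w₁,w₂,w₃)`. -/
theorem multiplicities_divide (w₁ w₂ w₃ : Fin 3 → ℤ)
    (hnn₁ : ∀ i, 0 ≤ w₁ i) (hnn₂ : ∀ i, 0 ≤ w₂ i) (hnn₃ : ∀ i, 0 ≤ w₃ i)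
    (hp₁ : IsPrimitive w₁) (hp₂ : IsPrimitive w₂) (hp₃ : IsPrimitive w₃)
    (hli : LinearIndependent ℝ ![coe3 w₁, coe3 w₂, coe3 w₃]) :
    (H2pts w₂ w₃).ncard ∣ (H3pts w₁ w₂ w₃).ncard ∧
    (H2pts w₁ w₃).ncard ∣ (H3pts w₁ w₂ w₃).ncard ∧
    (H2pts w₁ w₂).ncard ∣ (H3pts w₁ w₂ w₃).ncard :=
  multiplicities_divide_general w₁ w₂ w₃ hli
end
end

section
/- For every h ∈ H₁, writing h = h₂w₂ + h₃w₃ with h₂, h₃ ∈ [0,1), the coordinates h₂ and h₃ belong to the set {0, 1/μ₁, 2/μ₁, …, (μ₁−1)/μ₁}, and every element of this set is the w₂-coordinate (respectively the w₃-coordinate) of exactly one point of H₁. Moreover, there exists a unique ξ₁ ∈ {0, 1, …, μ₁−1} with gcd(ξ₁, μ₁) = 1 such that the μ₁ points of H₁ are exactly (i/μ₁)·w₂ + {iξ₁/μ₁}·w₃ for i = 0, 1, …, μ₁−1. -/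
noncomputable section

/-!
In the coordinates `(s, t) ↦ s • w₂ + t • w₃` of the plane spanned by `w₂, w₃`, the integral
points form an additive subgroup `L ⊇ ℤ²` of `ℝ²`, and `H₁` corresponds to `L ∩ [0,1)²`, a set of
representatives of the finite group `L / ℤ²` of order `μ₁`. By Lagrange, `μ₁ • L ⊆ ℤ²`, so every
coordinate lies in `(1/μ₁)ℤ`. Primitivity of `w₃` (resp. `w₂`) says that `L` meets the axis
`0 × ℝ` (resp. `ℝ × 0`) only in `ℤ`, so a point of `L ∩ [0,1)²` is determined by either of its
coordinates, and counting shows that each value `k/μ₁` occurs exactly once. The point with first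
coordinate `1/μ₁` is `(1/μ₁, ξ₁/μ₁)`; its multiples reduced mod `ℤ²` exhaust `L ∩ [0,1)²`, and
since one of them has second coordinate `1/μ₁`, `ξ₁` is invertible modulo `μ₁`.
-/

open Set Function

theorem eq_of_sub_eq_intCast {α : Type*} [Ring α] [LinearOrder α] [IsStrictOrderedRing α]
    [FloorRing α] {x y : α} (hx : x ∈ Ico (0 : α) 1) (hy : y ∈ Ico (0 : α) 1) {n : ℤ}
    (h : x - y = n) : x = y := by
  rw [← Int.fract_eq_self.2 hx, ← Int.fract_eq_self.2 hy]
  exact Int.fract_eq_fract.2 ⟨n, h⟩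

theorem exists_lt_eq_div_of_mul_eq_intCast {K : Type*} [Field K] [LinearOrder K]
    [IsStrictOrderedRing K] {x : K} (hx : x ∈ Ico (0 : K) 1) {n : ℕ} (hn : 0 < n)
    {m : ℤ} (h : (n : K) * x = m) : ∃ k < n, x = k / n := by
  have hn' : (0 : K) < n := by exact_mod_cast hn
  have hm0 : 0 ≤ m := by exact_mod_cast h ▸ mul_nonneg hn'.le hx.1
  have hmn : m < n := by exact_mod_cast h ▸ mul_lt_of_lt_one_right hn' hx.2
  lift m to ℕ using hm0
  refine ⟨m, by exact_mod_cast hmn, ?_⟩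
  rw [eq_div_iff hn'.ne', mul_comm, h]
  norm_cast

theorem existsUnique_mem_apply_eq {α β : Type*} {s : Set α} {f : α → β} {g : ℕ → β}
    (hf : InjOn f s) (hval : ∀ p ∈ s, ∃ k < s.ncard, f p = g k) {k : ℕ} (hk : k < s.ncard) :
    ∃! p, p ∈ s ∧ f p = g k := by
  have himage : f '' s = g '' Iio s.ncard := by
    refine eq_of_subset_of_ncard_le ?_ ?_ ((finite_Iio _).image _)
    · rintro _ ⟨p, hp, rfl⟩
      obtain ⟨j, hj, hpj⟩ := hval p hp
      exact ⟨j, hj, hpj.symm⟩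
    · rw [hf.ncard_image]
      exact (ncard_image_le (finite_Iio _)).trans (ncard_Iio_nat _).le
  obtain ⟨p, hp, hpk⟩ : g k ∈ f '' s := himage ▸ ⟨k, hk, rfl⟩
  exact ⟨p, ⟨hp, hpk⟩, fun q ⟨hq, hqk⟩ => hf hq hp (hqk.trans hpk.symm)⟩

def boxPoints (L : AddSubgroup (ℝ × ℝ)) : Set (ℝ × ℝ) := (L : Set (ℝ × ℝ)) ∩ Ico 0 1 ×ˢ Ico 0 1

def cyclicPoints (n ξ : ℕ) : Set (ℝ × ℝ) :=
  {p | ∃ i < n, p = ((i : ℝ) / n, Int.fract (((i * ξ : ℕ) : ℝ) / n))}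

section BoxPoints

variable {L : AddSubgroup (ℝ × ℝ)}

theorem zero_mem_boxPoints : (0 : ℝ × ℝ) ∈ boxPoints L :=
  ⟨L.zero_mem, ⟨le_rfl, zero_lt_one⟩, le_rfl, zero_lt_one⟩

theorem fract_mem_boxPoints (hZ : ∀ m n : ℤ, ((m : ℝ), (n : ℝ)) ∈ L) {p : ℝ × ℝ} (hp : p ∈ L) :
    (Int.fract p.1, Int.fract p.2) ∈ boxPoints L := by
  refine ⟨?_, ⟨Int.fract_nonneg _, Int.fract_lt_one _⟩, Int.fract_nonneg _, Int.fract_lt_one _⟩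
  have : (Int.fract p.1, Int.fract p.2) = p - ((⌊p.1⌋ : ℝ), (⌊p.2⌋ : ℝ)) := by
    ext <;> simp [Int.self_sub_floor]
  rw [SetLike.mem_coe, this]
  exact L.sub_mem hp (hZ _ _)

theorem ncard_boxPoints_pos (hfin : (boxPoints L).Finite) : 0 < (boxPoints L).ncard :=
  (ncard_pos hfin).2 ⟨0, zero_mem_boxPoints⟩

theorem exists_ncard_nsmul_eq_intCast (hZ : ∀ m n : ℤ, ((m : ℝ), (n : ℝ)) ∈ L)
    {p : ℝ × ℝ} (hp : p ∈ L) :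
    ∃ m n : ℤ, (boxPoints L).ncard • p = ((m : ℝ), (n : ℝ)) := by
  -- `boxPoints L` maps bijectively onto the image of `L` in `(ℝ/ℤ)²`, where Lagrange applies.
  let π : ℝ × ℝ →+ AddCircle (1 : ℝ) × AddCircle (1 : ℝ) :=
    (QuotientAddGroup.mk' _).prodMap (QuotientAddGroup.mk' _)
  have hπ : InjOn π (boxPoints L) := by
    rintro p ⟨-, hp1, hp2⟩ q ⟨-, hq1, hq2⟩ hpq
    rw [← zero_add (1 : ℝ)] at hp1 hp2 hq1 hq2
    exact Prod.ext ((AddCircle.coe_eq_coe_iff_of_mem_Ico hp1 hq1).1 (congrArg Prod.fst hpq))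
      ((AddCircle.coe_eq_coe_iff_of_mem_Ico hp2 hq2).1 (congrArg Prod.snd hpq))
  have himage : π '' L = π '' boxPoints L := by
    refine Subset.antisymm ?_ (image_mono inter_subset_left)
    rintro _ ⟨p, hp, rfl⟩
    exact ⟨_, fract_mem_boxPoints hZ hp, by ext <;> simp [π]⟩
  have hcard : Nat.card (L.map π) = (boxPoints L).ncard := by
    rw [← SetLike.coe_sort_coe, Nat.card_coe_set_eq, AddSubgroup.coe_map, himage, hπ.ncard_image]
  have h0 : π ((boxPoints L).ncard • p) = 0 := by
    rw [map_nsmul, ← hcard]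
    exact congrArg Subtype.val (card_nsmul_eq_zero' (x := (⟨π p, L.mem_map_of_mem π hp⟩ : L.map π)))
  obtain ⟨m, hm⟩ := (AddCircle.coe_eq_zero_iff 1).1 (congrArg Prod.fst h0)
  obtain ⟨n, hn⟩ := (AddCircle.coe_eq_zero_iff 1).1 (congrArg Prod.snd h0)
  exact ⟨m, n, Prod.ext (by simpa using hm.symm) (by simpa using hn.symm)⟩

theorem exists_lt_eq_div_of_mem_boxPoints (hZ : ∀ m n : ℤ, ((m : ℝ), (n : ℝ)) ∈ L)
    (hfin : (boxPoints L).Finite) {p : ℝ × ℝ} (hp : p ∈ boxPoints L) :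
    (∃ k < (boxPoints L).ncard, p.1 = k / (boxPoints L).ncard) ∧
      ∃ k < (boxPoints L).ncard, p.2 = k / (boxPoints L).ncard := by
  obtain ⟨hpL, hp1, hp2⟩ := hp
  obtain ⟨m, n, hmn⟩ := exists_ncard_nsmul_eq_intCast hZ hpL
  have hpos := ncard_boxPoints_pos hfin
  exact ⟨exists_lt_eq_div_of_mul_eq_intCast hp1 hpos (by simpa using congrArg Prod.fst hmn),
    exists_lt_eq_div_of_mul_eq_intCast hp2 hpos (by simpa using congrArg Prod.snd hmn)⟩

theorem injOn_fst_boxPoints (hsnd : ∀ t : ℝ, ((0 : ℝ), t) ∈ L → ∃ n : ℤ, (n : ℝ) = t) :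
    InjOn Prod.fst (boxPoints L) := by
  rintro p ⟨hpL, -, hp2⟩ q ⟨hqL, -, hq2⟩ h
  have hpq : p - q = (0, p.2 - q.2) := by ext <;> simp [h]
  obtain ⟨n, hn⟩ := hsnd _ (hpq ▸ L.sub_mem hpL hqL)
  exact Prod.ext h (eq_of_sub_eq_intCast hp2 hq2 hn.symm)

theorem injOn_snd_boxPoints (hfst : ∀ s : ℝ, (s, (0 : ℝ)) ∈ L → ∃ n : ℤ, (n : ℝ) = s) :
    InjOn Prod.snd (boxPoints L) := by
  rintro p ⟨hpL, hp1, -⟩ q ⟨hqL, hq1, -⟩ h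
  have hpq : p - q = (p.1 - q.1, 0) := by ext <;> simp [h]
  obtain ⟨n, hn⟩ := hfst _ (hpq ▸ L.sub_mem hpL hqL)
  exact Prod.ext (eq_of_sub_eq_intCast hp1 hq1 hn.symm) h

theorem existsUnique_mem_boxPoints_fst_eq (hZ : ∀ m n : ℤ, ((m : ℝ), (n : ℝ)) ∈ L)
    (hsnd : ∀ t : ℝ, ((0 : ℝ), t) ∈ L → ∃ n : ℤ, (n : ℝ) = t) (hfin : (boxPoints L).Finite)
    {k : ℕ} (hk : k < (boxPoints L).ncard) :
    ∃! p, p ∈ boxPoints L ∧ p.1 = k / (boxPoints L).ncard :=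
  existsUnique_mem_apply_eq (g := fun k : ℕ => (k : ℝ) / (boxPoints L).ncard)
    (injOn_fst_boxPoints hsnd)
    (fun _ hp => (exists_lt_eq_div_of_mem_boxPoints hZ hfin hp).1) hk

theorem existsUnique_mem_boxPoints_snd_eq (hZ : ∀ m n : ℤ, ((m : ℝ), (n : ℝ)) ∈ L)
    (hfst : ∀ s : ℝ, (s, (0 : ℝ)) ∈ L → ∃ n : ℤ, (n : ℝ) = s) (hfin : (boxPoints L).Finite)
    {k : ℕ} (hk : k < (boxPoints L).ncard) :
    ∃! p, p ∈ boxPoints L ∧ p.2 = k / (boxPoints L).ncard :=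
  existsUnique_mem_apply_eq (g := fun k : ℕ => (k : ℝ) / (boxPoints L).ncard)
    (injOn_snd_boxPoints hfst)
    (fun _ hp => (exists_lt_eq_div_of_mem_boxPoints hZ hfin hp).2) hk

theorem exists_lt_mk_one_div_mem (hZ : ∀ m n : ℤ, ((m : ℝ), (n : ℝ)) ∈ L)
    (hsnd : ∀ t : ℝ, ((0 : ℝ), t) ∈ L → ∃ n : ℤ, (n : ℝ) = t) (hfin : (boxPoints L).Finite) :
    ∃ ξ < (boxPoints L).ncard,
      ((1 : ℝ) / (boxPoints L).ncard, (ξ : ℝ) / (boxPoints L).ncard) ∈ L := by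
  obtain hone | hlt : (boxPoints L).ncard = 1 ∨ 1 < (boxPoints L).ncard := by
    have := ncard_boxPoints_pos hfin; omega
  · exact ⟨0, by omega, by simpa [hone] using hZ 1 0⟩
  · obtain ⟨p, ⟨hp, hp1⟩, -⟩ := existsUnique_mem_boxPoints_fst_eq hZ hsnd hfin hlt
    obtain ⟨ξ, hξ, hp2⟩ := (exists_lt_eq_div_of_mem_boxPoints hZ hfin hp).2
    rw [Nat.cast_one] at hp1
    exact ⟨ξ, hξ, by rw [← hp1, ← hp2]; exact hp.1⟩

theorem cyclicPoints_subset_boxPoints (hZ : ∀ m n : ℤ, ((m : ℝ), (n : ℝ)) ∈ L) {n ξ : ℕ}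
    (hg : ((1 : ℝ) / n, (ξ : ℝ) / n) ∈ L) : cyclicPoints n ξ ⊆ boxPoints L := by
  rintro _ ⟨i, hi, rfl⟩
  have hmul : i • ((1 : ℝ) / n, (ξ : ℝ) / n) = ((i : ℝ) / n, ((i * ξ : ℕ) : ℝ) / n) := by
    rw [Prod.smul_mk, nsmul_eq_mul, nsmul_eq_mul, Nat.cast_mul, mul_div_assoc, mul_one_div]
  have hmem := fract_mem_boxPoints hZ (hmul ▸ L.nsmul_mem hg i)
  rwa [Int.fract_div_natCast_eq_div_natCast_mod (m := i), Nat.mod_eq_of_lt hi] at hmem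

theorem boxPoints_eq_cyclicPoints (hZ : ∀ m n : ℤ, ((m : ℝ), (n : ℝ)) ∈ L)
    (hsnd : ∀ t : ℝ, ((0 : ℝ), t) ∈ L → ∃ n : ℤ, (n : ℝ) = t) (hfin : (boxPoints L).Finite)
    {ξ : ℕ} (hg : ((1 : ℝ) / (boxPoints L).ncard, (ξ : ℝ) / (boxPoints L).ncard) ∈ L) :
    boxPoints L = cyclicPoints (boxPoints L).ncard ξ := by
  refine Subset.antisymm (fun p hp => ?_) (cyclicPoints_subset_boxPoints hZ hg)
  obtain ⟨k, hk, hpk⟩ := (exists_lt_eq_div_of_mem_boxPoints hZ hfin hp).1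
  have hq : _ ∈ cyclicPoints (boxPoints L).ncard ξ := ⟨k, hk, rfl⟩
  rwa [injOn_fst_boxPoints hsnd hp (cyclicPoints_subset_boxPoints hZ hg hq) hpk]

theorem coprime_of_boxPoints_eq_cyclicPoints (hZ : ∀ m n : ℤ, ((m : ℝ), (n : ℝ)) ∈ L)
    (hfst : ∀ s : ℝ, (s, (0 : ℝ)) ∈ L → ∃ n : ℤ, (n : ℝ) = s) (hfin : (boxPoints L).Finite)
    {ξ : ℕ} (hB : boxPoints L = cyclicPoints (boxPoints L).ncard ξ) :
    ξ.Coprime (boxPoints L).ncard := by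
  obtain hone | hlt : (boxPoints L).ncard = 1 ∨ 1 < (boxPoints L).ncard := by
    have := ncard_boxPoints_pos hfin; omega
  · rw [hone]
    exact Nat.coprime_one_right ξ
  · obtain ⟨p, ⟨hp, hp2⟩, -⟩ := existsUnique_mem_boxPoints_snd_eq hZ hfst hfin hlt
    obtain ⟨i, -, rfl⟩ := hB ▸ hp
    rw [Int.fract_div_natCast_eq_div_natCast_mod] at hp2
    have hi : i * ξ % (boxPoints L).ncard = 1 := by
      exact_mod_cast (div_left_inj' (by positivity)).1 hp2
    exact Nat.coprime_of_mul_modEq_one i (by rw [Nat.ModEq, Nat.mod_eq_of_lt hlt, mul_comm, hi])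

theorem snd_eq_of_mem_cyclicPoints {n ξ : ℕ} (hn : 1 < n) (hξ : ξ < n) {p : ℝ × ℝ}
    (hp : p ∈ cyclicPoints n ξ) (h1 : p.1 = 1 / n) : p.2 = ξ / n := by
  obtain ⟨i, -, rfl⟩ := hp
  obtain rfl : i = 1 := by exact_mod_cast (div_left_inj' (by positivity)).1 h1
  rw [one_mul, Int.fract_div_natCast_eq_div_natCast_mod, Nat.mod_eq_of_lt hξ]

theorem eq_of_boxPoints_subset_cyclicPoints (hZ : ∀ m n : ℤ, ((m : ℝ), (n : ℝ)) ∈ L)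
    (hsnd : ∀ t : ℝ, ((0 : ℝ), t) ∈ L → ∃ n : ℤ, (n : ℝ) = t) (hfin : (boxPoints L).Finite)
    {ξ ξ' : ℕ} (hξ : ξ < (boxPoints L).ncard) (hξ' : ξ' < (boxPoints L).ncard)
    (h : boxPoints L ⊆ cyclicPoints (boxPoints L).ncard ξ)
    (h' : boxPoints L ⊆ cyclicPoints (boxPoints L).ncard ξ') : ξ = ξ' := by
  obtain hone | hlt : (boxPoints L).ncard = 1 ∨ 1 < (boxPoints L).ncard := by
    have := ncard_boxPoints_pos hfin; omega
  · omega
  · obtain ⟨p, ⟨hp, hp1⟩, -⟩ := existsUnique_mem_boxPoints_fst_eq hZ hsnd hfin hlt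
    rw [Nat.cast_one] at hp1
    have := (snd_eq_of_mem_cyclicPoints hlt hξ (h hp) hp1).symm.trans
      (snd_eq_of_mem_cyclicPoints hlt hξ' (h' hp) hp1)
    exact_mod_cast (div_left_inj' (by positivity)).1 this

end BoxPoints

theorem coe3_injective : Injective coe3 := fun _ _ h =>
  funext fun i => Int.cast_injective (α := ℝ) (congrFun h i)

theorem IsPrimitive.exists_intCast_eq {w v : Fin 3 → ℤ} (hw : IsPrimitive w) {r : ℝ}
    (h : coe3 v = r • coe3 w) : ∃ n : ℤ, (n : ℝ) = r := by
  obtain ⟨x, y, z, hxyz⟩ : ∃ x y z : ℤ, x * w 0 + y * w 1 + z * w 2 = 1 := by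
    obtain ⟨u, v, huv⟩ := Int.isCoprime_iff_gcd_eq_one.2 hw
    rw [Int.gcd_eq_gcd_ab] at huv
    exact ⟨u, v * Int.gcdA (w 1) (w 2), v * Int.gcdB (w 1) (w 2), by linear_combination huv⟩
  have hv : ∀ i, (v i : ℝ) = r * w i := fun i => by simpa [coe3] using congrFun h i
  refine ⟨x * v 0 + y * v 1 + z * v 2, ?_⟩
  have hone : ((x * w 0 + y * w 1 + z * w 2 : ℤ) : ℝ) = 1 := by exact_mod_cast hxyz
  push_cast at hone ⊢
  rw [hv, hv, hv]
  linear_combination r * hone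

theorem H2pts_finite (a b : Fin 3 → ℤ) : (H2pts a b).Finite := by
  refine (finite_Icc (-(|a| + |b|)) (|a| + |b|)).subset ?_
  rintro x ⟨s, t, hs0, hs1, ht0, ht1, hx⟩
  have hbound : ∀ i, |x i| ≤ |a i| + |b i| := fun i => by
    have hxi : (x i : ℝ) = s * a i + t * b i := by simpa [coe3] using congrFun hx i
    have : |(x i : ℝ)| ≤ |(a i : ℝ)| + |(b i : ℝ)| := by
      rw [hxi]
      calc |s * a i + t * b i| ≤ s * |(a i : ℝ)| + t * |(b i : ℝ)| := by
            refine (abs_add_le _ _).trans ?_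
            rw [abs_mul, abs_mul, abs_of_nonneg hs0, abs_of_nonneg ht0]
        _ ≤ |(a i : ℝ)| + |(b i : ℝ)| :=
            add_le_add (mul_le_of_le_one_left (abs_nonneg _) hs1.le)
              (mul_le_of_le_one_left (abs_nonneg _) ht1.le)
    exact_mod_cast this
  exact ⟨fun i => by simpa using neg_le_of_abs_le (hbound i),
    fun i => by simpa using le_of_abs_le (hbound i)⟩

def linComb (a b : Fin 3 → ℤ) : ℝ × ℝ →ₗ[ℝ] Fin 3 → ℝ :=
  (LinearMap.fst ℝ ℝ ℝ).smulRight (coe3 a) + (LinearMap.snd ℝ ℝ ℝ).smulRight (coe3 b)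

def coordLattice (a b : Fin 3 → ℤ) : AddSubgroup (ℝ × ℝ) :=
  ((Int.castAddHom ℝ).compLeft (Fin 3)).range.comap (linComb a b).toAddMonoidHom

section CoordLattice

variable {a b : Fin 3 → ℤ}

theorem linComb_apply (p : ℝ × ℝ) : linComb a b p = p.1 • coe3 a + p.2 • coe3 b := rfl

theorem linComb_injective (h : LinearIndependent ℝ ![coe3 a, coe3 b]) :
    Injective (linComb a b) :=
  fun _ _ hpq => Prod.ext_iff.2 (h.eq_of_pair hpq)

theorem mem_coordLattice {p : ℝ × ℝ} : p ∈ coordLattice a b ↔ ∃ v, coe3 v = linComb a b p :=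
  Iff.rfl

theorem intCast_mem_coordLattice (m n : ℤ) : ((m : ℝ), (n : ℝ)) ∈ coordLattice a b :=
  mem_coordLattice.2 ⟨m • a + n • b, by ext i; simp [coe3, linComb_apply]⟩

theorem exists_intCast_eq_of_mk_zero_mem_coordLattice (ha : IsPrimitive a) :
    ∀ s : ℝ, (s, (0 : ℝ)) ∈ coordLattice a b → ∃ n : ℤ, (n : ℝ) = s := fun _ h => by
  obtain ⟨v, hv⟩ := mem_coordLattice.1 h
  exact ha.exists_intCast_eq (by simpa [linComb_apply] using hv)

theorem exists_intCast_eq_of_zero_mk_mem_coordLattice (hb : IsPrimitive b) :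
    ∀ t : ℝ, ((0 : ℝ), t) ∈ coordLattice a b → ∃ n : ℤ, (n : ℝ) = t := fun _ h => by
  obtain ⟨v, hv⟩ := mem_coordLattice.1 h
  exact hb.exists_intCast_eq (by simpa [linComb_apply] using hv)

theorem H2pts_eq_preimage :
    H2pts a b = coe3 ⁻¹' (linComb a b '' boxPoints (coordLattice a b)) := by
  ext x
  constructor
  · rintro ⟨s, t, hs0, hs1, ht0, ht1, hx⟩
    exact ⟨(s, t), ⟨⟨x, hx⟩, ⟨hs0, hs1⟩, ht0, ht1⟩, hx.symm⟩
  · rintro ⟨p, ⟨-, ⟨hs0, hs1⟩, ht0, ht1⟩, hx⟩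
    exact ⟨p.1, p.2, hs0, hs1, ht0, ht1, hx.symm⟩

theorem image_coe3_H2pts : coe3 '' H2pts a b = linComb a b '' boxPoints (coordLattice a b) := by
  rw [H2pts_eq_preimage, image_preimage_eq_of_subset]
  rintro _ ⟨p, ⟨hp, -⟩, rfl⟩
  exact mem_coordLattice.1 hp

theorem ncard_H2pts (hV : Injective (linComb a b)) :
    (H2pts a b).ncard = (boxPoints (coordLattice a b)).ncard := by
  rw [← ncard_image_of_injective _ coe3_injective, image_coe3_H2pts, ncard_image_of_injective _ hV]

theorem finite_boxPoints_coordLattice (hV : Injective (linComb a b)) :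
    (boxPoints (coordLattice a b)).Finite :=
  Finite.of_finite_image (image_coe3_H2pts ▸ (H2pts_finite a b).image coe3) hV.injOn

theorem mem_boxPoints_of_mem_H2pts (hV : Injective (linComb a b)) {x : Fin 3 → ℤ} {p : ℝ × ℝ}
    (hx : x ∈ H2pts a b) (hxp : coe3 x = linComb a b p) : p ∈ boxPoints (coordLattice a b) := by
  obtain ⟨q, hq, hqx⟩ := H2pts_eq_preimage ▸ hx
  rwa [← hV (hqx.trans hxp)]

theorem existsUnique_H2pts_of_existsUnique_boxPoints (hV : Injective (linComb a b))
    {P : ℝ × ℝ → Prop} (h : ∃! p, p ∈ boxPoints (coordLattice a b) ∧ P p) :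
    ∃! x, x ∈ H2pts a b ∧ ∃ p, P p ∧ coe3 x = linComb a b p := by
  obtain ⟨p, ⟨hp, hPp⟩, huniq⟩ := h
  obtain ⟨x, hx, hxp⟩ := image_coe3_H2pts ▸ mem_image_of_mem (linComb a b) hp
  refine ⟨x, ⟨hx, p, hPp, hxp⟩, ?_⟩
  rintro y ⟨hy, q, hPq, hyq⟩
  rw [huniq q ⟨mem_boxPoints_of_mem_H2pts hV hy hyq, hPq⟩] at hyq
  exact coe3_injective (hyq.trans hxp.symm)

theorem boxPoints_subset_of_H2pts_eq (hV : Injective (linComb a b)) {P : Set (ℝ × ℝ)}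
    (h : H2pts a b = coe3 ⁻¹' (linComb a b '' P)) : boxPoints (coordLattice a b) ⊆ P := by
  rw [← image_subset_image_iff hV, ← image_coe3_H2pts, h]
  exact image_preimage_subset _ _

theorem preimage_image_cyclicPoints (n ξ : ℕ) :
    coe3 ⁻¹' (linComb a b '' cyclicPoints n ξ) = {x | ∃ i : ℕ, i < n ∧
      coe3 x = ((i : ℝ) / n) • coe3 a + Int.fract (((i * ξ : ℕ) : ℝ) / n) • coe3 b} := by
  ext x
  simp [cyclicPoints, linComb_apply, eq_comm]

end CoordLattice

theorem description_of_H1_general (w₁ w₂ w₃ : Fin 3 → ℤ)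
    (hp₂ : IsPrimitive w₂) (hp₃ : IsPrimitive w₃)
    (hli : LinearIndependent ℝ ![coe3 w₁, coe3 w₂, coe3 w₃])
    (μ₁ : ℕ) (hμ₁ : μ₁ = (H2pts w₂ w₃).ncard) :
    (∀ h ∈ H2pts w₂ w₃, ∀ h₂ h₃ : ℝ,
      coe3 h = h₂ • coe3 w₂ + h₃ • coe3 w₃ →
      (∃ k : ℕ, k < μ₁ ∧ h₂ = (k : ℝ) / (μ₁ : ℝ)) ∧
      (∃ k : ℕ, k < μ₁ ∧ h₃ = (k : ℝ) / (μ₁ : ℝ))) ∧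
    (∀ k : ℕ, k < μ₁ →
      ∃! h : Fin 3 → ℤ, h ∈ H2pts w₂ w₃ ∧
        ∃ h₃ : ℝ, coe3 h = ((k : ℝ) / (μ₁ : ℝ)) • coe3 w₂ + h₃ • coe3 w₃) ∧
    (∀ k : ℕ, k < μ₁ →
      ∃! h : Fin 3 → ℤ, h ∈ H2pts w₂ w₃ ∧
        ∃ h₂ : ℝ, coe3 h = h₂ • coe3 w₂ + ((k : ℝ) / (μ₁ : ℝ)) • coe3 w₃) ∧
    (∃! ξ₁ : ℕ, ξ₁ < μ₁ ∧ Nat.gcd ξ₁ μ₁ = 1 ∧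
      H2pts w₂ w₃ = {h : Fin 3 → ℤ | ∃ i : ℕ, i < μ₁ ∧
        coe3 h = ((i : ℝ) / (μ₁ : ℝ)) • coe3 w₂ +
          Int.fract (((i * ξ₁ : ℕ) : ℝ) / (μ₁ : ℝ)) • coe3 w₃}) := by
  have hV : Injective (linComb w₂ w₃) :=
    linComb_injective (hli.comp Fin.succ (Fin.succ_injective _))
  have hZ := intCast_mem_coordLattice (a := w₂) (b := w₃)
  have hfst := exists_intCast_eq_of_mk_zero_mem_coordLattice (b := w₃) hp₂
  have hsnd := exists_intCast_eq_of_zero_mk_mem_coordLattice (a := w₂) hp₃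
  have hfin := finite_boxPoints_coordLattice hV
  obtain rfl : μ₁ = (boxPoints (coordLattice w₂ w₃)).ncard := hμ₁.trans (ncard_H2pts hV)
  refine ⟨fun h hh h₂ h₃ hcoe => exists_lt_eq_div_of_mem_boxPoints hZ hfin
      (mem_boxPoints_of_mem_H2pts (p := (h₂, h₃)) hV hh hcoe), fun k hk => ?_, fun k hk => ?_, ?_⟩
  · simpa [linComb_apply] using existsUnique_H2pts_of_existsUnique_boxPoints hV
      (existsUnique_mem_boxPoints_fst_eq hZ hsnd hfin hk)
  · simpa [linComb_apply] using existsUnique_H2pts_of_existsUnique_boxPoints hV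
      (existsUnique_mem_boxPoints_snd_eq hZ hfst hfin hk)
  · obtain ⟨ξ, hξ, hg⟩ := exists_lt_mk_one_div_mem hZ hsnd hfin
    have hB := boxPoints_eq_cyclicPoints hZ hsnd hfin hg
    refine ⟨ξ, ⟨hξ, coprime_of_boxPoints_eq_cyclicPoints hZ hfst hfin hB, ?_⟩, ?_⟩
    · rw [← preimage_image_cyclicPoints, ← hB]
      exact H2pts_eq_preimage
    · rintro ξ' ⟨hξ', -, h⟩
      rw [← preimage_image_cyclicPoints] at h
      exact (eq_of_boxPoints_subset_cyclicPoints hZ hsnd hfin hξ hξ' hB.subset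
        (boxPoints_subset_of_H2pts_eq hV h)).symm

/-- For every `h ∈ H₁ = ℤ³ ∩ ◊(w₂,w₃)`, writing `h = h₂w₂ + h₃w₃` with
`h₂, h₃ ∈ [0,1)`, the coordinates `h₂`, `h₃` belong to `{0, 1/μ₁, …, (μ₁−1)/μ₁}`, and every
element of this set is the `w₂`-coordinate (resp. the `w₃`-coordinate) of exactly one point of
`H₁`.  Moreover, there is a unique `ξ₁ ∈ {0,…,μ₁−1}` with `gcd(ξ₁, μ₁) = 1` such that the `μ₁`
points of `H₁` are exactly `(i/μ₁)·w₂ + {iξ₁/μ₁}·w₃` for `i = 0, …, μ₁−1`. -/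
theorem description_of_H1 (w₁ w₂ w₃ : Fin 3 → ℤ)
    (hnn₁ : ∀ i, 0 ≤ w₁ i) (hnn₂ : ∀ i, 0 ≤ w₂ i) (hnn₃ : ∀ i, 0 ≤ w₃ i)
    (hp₁ : IsPrimitive w₁) (hp₂ : IsPrimitive w₂) (hp₃ : IsPrimitive w₃)
    (hli : LinearIndependent ℝ ![coe3 w₁, coe3 w₂, coe3 w₃])
    (μ₁ : ℕ) (hμ₁ : μ₁ = (H2pts w₂ w₃).ncard) :
    (∀ h ∈ H2pts w₂ w₃, ∀ h₂ h₃ : ℝ,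
      coe3 h = h₂ • coe3 w₂ + h₃ • coe3 w₃ →
      (∃ k : ℕ, k < μ₁ ∧ h₂ = (k : ℝ) / (μ₁ : ℝ)) ∧
      (∃ k : ℕ, k < μ₁ ∧ h₃ = (k : ℝ) / (μ₁ : ℝ))) ∧
    (∀ k : ℕ, k < μ₁ →
      ∃! h : Fin 3 → ℤ, h ∈ H2pts w₂ w₃ ∧
        ∃ h₃ : ℝ, coe3 h = ((k : ℝ) / (μ₁ : ℝ)) • coe3 w₂ + h₃ • coe3 w₃) ∧
    (∀ k : ℕ, k < μ₁ →
      ∃! h : Fin 3 → ℤ, h ∈ H2pts w₂ w₃ ∧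
        ∃ h₂ : ℝ, coe3 h = h₂ • coe3 w₂ + ((k : ℝ) / (μ₁ : ℝ)) • coe3 w₃) ∧
    (∃! ξ₁ : ℕ, ξ₁ < μ₁ ∧ Nat.gcd ξ₁ μ₁ = 1 ∧
      H2pts w₂ w₃ = {h : Fin 3 → ℤ | ∃ i : ℕ, i < μ₁ ∧
        coe3 h = ((i : ℝ) / (μ₁ : ℝ)) • coe3 w₂ +
          Int.fract (((i * ξ₁ : ℕ) : ℝ) / (μ₁ : ℝ)) • coe3 w₃}) :=
  description_of_H1_general w₁ w₂ w₃ hp₂ hp₃ hli μ₁ hμ₁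

end
end

section
/- Write μ = μ₁μ₂φ₃ with φ₃ a positive integer (this is possible since μ₁μ₂ divides μ). Then gcd(μ₁,μ₂) divides μ₃ and μ₃ divides gcd(μ₁,μ₂)·φ₃; as a consequence, gcd(μ₁,μ₂,μ₃) = gcd(μ₁,μ₂). (The same holds for the other two combinations of two out of the three multiplicities μ₁, μ₂, μ₃.) -/
noncomputable section

/-!
For `a` primitive and `a ⨯₃ b ≠ 0`, the lattice points of `◊(a,b)` are counted by the content
`g` (gcd of the coordinates) of `a ⨯₃ b`: a point `x = s • a + t • b` is determined by the integer
`t * g = e ⬝ᵥ (a ⨯₃ x)` in `[0, g)`, since `s = fract (-(t * (c ⬝ᵥ b)))` for a Bézout vector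
`c ⬝ᵥ a = 1`, and every value in `[0, g)` occurs because `b ≡ (c ⬝ᵥ b) • a` modulo `g`. So
`μ₁, μ₂, μ₃` are the contents of `w₂ ⨯₃ w₃, w₁ ⨯₃ w₃, w₁ ⨯₃ w₂`.

Modulo `d = gcd(μ₁, μ₂)` both `w₁` and `w₂` have vanishing cross product with the primitive
vector `w₃`, hence are multiples of it (vector triple product with `c ⬝ᵥ w₃ = 1`), so
`w₁ ⨯₃ w₂ ≡ 0` and `d ∣ μ₃`. The other divisibility is arithmetic: `lcm(μ₁, μ₂) μ₃` divides
`μ = lcm(μ₁, μ₂) gcd(μ₁, μ₂) φ₃`.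
-/

section

open Matrix

lemma LinearIndependent.pair {ι R M : Type*} [Ring R] [AddCommGroup M] [Module R M]
    {v : ι → M} (h : LinearIndependent R v) {i j : ι} (hij : i ≠ j) :
    LinearIndependent R ![v i, v j] := by
  have hinj : Function.Injective ![i, j] := by
    intro x y hxy
    fin_cases x <;> fin_cases y <;> simp_all [eq_comm]
  convert h.comp _ hinj using 1
  ext k
  fin_cases k <;> rfl

lemma map_comp_cross {R S : Type*} [CommRing R] [CommRing S] (f : R →+* S) (u v : Fin 3 → R) :
    f ∘ (u ⨯₃ v) = (f ∘ u) ⨯₃ (f ∘ v) := by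
  funext i
  fin_cases i <;> simp [cross_apply]

lemma coe3_cross (u v : Fin 3 → ℤ) : coe3 (u ⨯₃ v) = coe3 u ⨯₃ coe3 v :=
  map_comp_cross (Int.castRingHom ℝ) u v

lemma coe3_dotProduct (u v : Fin 3 → ℤ) : ((u ⬝ᵥ v : ℤ) : ℝ) = coe3 u ⬝ᵥ coe3 v :=
  RingHom.map_dotProduct (Int.castRingHom ℝ) u v

lemma coe3_injective_s5 : Function.Injective coe3 :=
  fun _ _ h => funext fun i => Int.cast_injective (congrFun h i)

lemma cross_ne_zero_of_linearIndependent {u v : Fin 3 → ℤ}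
    (h : LinearIndependent ℝ ![coe3 u, coe3 v]) : u ⨯₃ v ≠ 0 := fun huv =>
  crossProduct_ne_zero_iff_linearIndependent.2 h <| by
    rw [← coe3_cross, huv]
    exact funext fun _ => Int.cast_zero

def content3 (v : Fin 3 → ℤ) : ℕ := Int.gcd (v 0) (Int.gcd (v 1) (v 2))

lemma IsPrimitive.content3_eq_one {v : Fin 3 → ℤ} (hv : IsPrimitive v) : content3 v = 1 := hv

lemma dvd_content3_iff {d : ℤ} {v : Fin 3 → ℤ} : d ∣ (content3 v : ℤ) ↔ ∀ i, d ∣ v i := by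
  simp [content3, Int.dvd_coe_gcd_iff, Fin.forall_fin_succ]

lemma content3_eq_zero_iff {v : Fin 3 → ℤ} : content3 v = 0 ↔ v = 0 := by
  simp [content3, Int.gcd_eq_zero_iff, funext_iff, Fin.forall_fin_succ]

lemma content3_cross_comm (u v : Fin 3 → ℤ) : content3 (u ⨯₃ v) = content3 (v ⨯₃ u) := by
  rw [← cross_anticomm]
  simp [content3]

lemma exists_dotProduct_eq_content3 (v : Fin 3 → ℤ) : ∃ c, c ⬝ᵥ v = content3 v := by
  refine ⟨![Int.gcdA (v 0) (Int.gcd (v 1) (v 2)),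
    Int.gcdB (v 0) (Int.gcd (v 1) (v 2)) * Int.gcdA (v 1) (v 2),
    Int.gcdB (v 0) (Int.gcd (v 1) (v 2)) * Int.gcdB (v 1) (v 2)], ?_⟩
  have h₀ := Int.gcd_eq_gcd_ab (v 0) (Int.gcd (v 1) (v 2))
  have h₁ := Int.gcd_eq_gcd_ab (v 1) (v 2)
  simp only [content3, vec3_dotProduct, cons_val]
  linear_combination -h₀ - Int.gcdB (v 0) (Int.gcd (v 1) (v 2)) * h₁

lemma natCast_dvd_content3_iff {d : ℕ} {v : Fin 3 → ℤ} :
    d ∣ content3 v ↔ (Int.cast ∘ v : Fin 3 → ZMod d) = 0 := by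
  simp [← Int.natCast_dvd_natCast, dvd_content3_iff, funext_iff, ZMod.intCast_zmod_eq_zero_iff_dvd]

section CrossProduct

variable {R : Type*} [CommRing R] {c u v w : Fin 3 → R}

lemma eq_smul_of_cross_eq_zero (hc : c ⬝ᵥ w = 1) (h : w ⨯₃ u = 0) : u = (c ⬝ᵥ u) • w := by
  have := cross_cross_eq_smul_sub_smul' c w u
  rw [h, map_zero, dotProduct_comm w c, hc, one_smul, eq_comm, sub_eq_zero] at this
  exact this.symm

lemma cross_eq_zero_of_cross_eq_zero (hc : c ⬝ᵥ w = 1) (hu : w ⨯₃ u = 0) (hv : w ⨯₃ v = 0) :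
    u ⨯₃ v = 0 := by
  rw [eq_smul_of_cross_eq_zero hc hu, eq_smul_of_cross_eq_zero hc hv]
  simp [cross_self]

end CrossProduct

lemma dvd_content3_cross_iff {d : ℕ} {u v : Fin 3 → ℤ} :
    d ∣ content3 (u ⨯₃ v) ↔ (Int.cast ∘ u : Fin 3 → ZMod d) ⨯₃ (Int.cast ∘ v) = 0 := by
  rw [natCast_dvd_content3_iff]
  exact iff_of_eq (congrArg (· = 0) (map_comp_cross (Int.castRingHom (ZMod d)) u v))

lemma intCast_comp_dotProduct {S : Type*} [CommRing S] (u v : Fin 3 → ℤ) :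
    (Int.cast ∘ u : Fin 3 → S) ⬝ᵥ (Int.cast ∘ v) = ((u ⬝ᵥ v : ℤ) : S) :=
  (RingHom.map_dotProduct (Int.castRingHom S) u v).symm

lemma gcd_content3_cross_dvd {u v w : Fin 3 → ℤ} (hw : IsPrimitive w) :
    Nat.gcd (content3 (w ⨯₃ u)) (content3 (w ⨯₃ v)) ∣ content3 (u ⨯₃ v) := by
  obtain ⟨c, hc⟩ := exists_dotProduct_eq_content3 w
  rw [dvd_content3_cross_iff]
  refine cross_eq_zero_of_cross_eq_zero (c := Int.cast ∘ c) ?_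
    (dvd_content3_cross_iff.1 (Nat.gcd_dvd_left _ _))
    (dvd_content3_cross_iff.1 (Nat.gcd_dvd_right _ _))
  rw [intCast_comp_dotProduct, hc, hw.content3_eq_one, Nat.cast_one, Int.cast_one]

section Counting

variable {a b x : Fin 3 → ℤ} {s t : ℝ}

lemma intCast_dotProduct_cross_eq (e : Fin 3 → ℤ) (hx : coe3 x = s • coe3 a + t • coe3 b) :
    ((e ⬝ᵥ (a ⨯₃ x) : ℤ) : ℝ) = t * (e ⬝ᵥ (a ⨯₃ b) : ℤ) := by
  rw [coe3_dotProduct, coe3_dotProduct, coe3_cross, coe3_cross, hx, map_add, map_smul, map_smul,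
    cross_self, smul_zero, zero_add, dotProduct_smul, smul_eq_mul]

lemma fract_eq_of_coe3_eq {c : Fin 3 → ℤ} (hc : c ⬝ᵥ a = 1) (hs₀ : 0 ≤ s) (hs₁ : s < 1)
    (hx : coe3 x = s • coe3 a + t • coe3 b) : Int.fract (-(t * (c ⬝ᵥ b : ℤ))) = s := by
  have hcx : ((c ⬝ᵥ x : ℤ) : ℝ) = s + t * (c ⬝ᵥ b : ℤ) := by
    rw [coe3_dotProduct, hx, dotProduct_add, dotProduct_smul, dotProduct_smul, ← coe3_dotProduct,
      ← coe3_dotProduct, hc, Int.cast_one, smul_eq_mul, smul_eq_mul, mul_one]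
  refine Int.fract_eq_iff.2 ⟨hs₀, hs₁, -(c ⬝ᵥ x), ?_⟩
  push_cast
  linarith

lemma exists_coe3_eq_fract_smul_add_smul {c : Fin 3 → ℤ} (hc : c ⬝ᵥ a = 1) {g : ℕ}
    (hg₀ : g ≠ 0) (hg : g ∣ content3 (a ⨯₃ b)) (l : ℤ) :
    ∃ x, coe3 x = Int.fract (-((l / g : ℝ) * (c ⬝ᵥ b : ℤ))) • coe3 a + (l / g : ℝ) • coe3 b := by
  have hb : (Int.cast ∘ b : Fin 3 → ZMod g) = ((c ⬝ᵥ b : ℤ) : ZMod g) • (Int.cast ∘ a) := by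
    rw [← intCast_comp_dotProduct]
    refine eq_smul_of_cross_eq_zero ?_ (dvd_content3_cross_iff.1 hg)
    rw [intCast_comp_dotProduct, hc, Int.cast_one]
  have hdvd : ∀ i, (g : ℤ) ∣ b i - (c ⬝ᵥ b) * a i := fun i => by
    simpa [← ZMod.intCast_zmod_eq_zero_iff_dvd, sub_eq_zero] using congrFun hb i
  refine ⟨l • (fun i => (b i - (c ⬝ᵥ b) * a i) / g) - ⌊-((l / g : ℝ) * (c ⬝ᵥ b : ℤ))⌋ • a, ?_⟩
  funext i
  have hq : (((b i - (c ⬝ᵥ b) * a i) / g : ℤ) : ℝ) * g = b i - (c ⬝ᵥ b : ℤ) * a i := by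
    exact_mod_cast Int.ediv_mul_cancel (hdvd i)
  simp only [coe3, Pi.add_apply, Pi.sub_apply, Pi.smul_apply, smul_eq_mul, Int.fract]
  push_cast
  field_simp
  linear_combination l * hq

theorem ncard_H2pts_s5 (ha : IsPrimitive a) (hab : a ⨯₃ b ≠ 0) :
    (H2pts a b).ncard = content3 (a ⨯₃ b) := by
  set g := content3 (a ⨯₃ b)
  have hg₀ : g ≠ 0 := mt content3_eq_zero_iff.1 hab
  have hg : (0 : ℝ) < g := by positivity
  obtain ⟨c, hc⟩ := exists_dotProduct_eq_content3 a
  rw [ha.content3_eq_one, Nat.cast_one] at hc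
  obtain ⟨e, he⟩ := exists_dotProduct_eq_content3 (a ⨯₃ b)
  have hτ : ∀ {x s t}, coe3 x = s • coe3 a + t • coe3 b → ((e ⬝ᵥ (a ⨯₃ x) : ℤ) : ℝ) = t * g :=
    fun hx => by rw [intCast_dotProduct_cross_eq e hx, he, Int.cast_natCast]
  rw [show g = (Set.Ico (0 : ℤ) g).ncard by simp [← Finset.coe_Ico, Set.ncard_coe_finset]]
  refine Set.BijOn.ncard_eq (f := fun x => e ⬝ᵥ (a ⨯₃ x)) ⟨?_, ?_, ?_⟩
  · rintro x ⟨s, t, -, -, ht₀, ht₁, hx⟩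
    have := hτ hx
    constructor
    · exact_mod_cast this ▸ mul_nonneg ht₀ hg.le
    · exact_mod_cast this ▸ (mul_lt_iff_lt_one_left hg).2 ht₁
  · rintro x ⟨s, t, hs₀, hs₁, -, -, hx⟩ x' ⟨s', t', hs₀', hs₁', -, -, hx'⟩ hxx'
    have htt : t = t' := by
      have := (hτ hx).symm.trans ((congrArg (fun n : ℤ => (n : ℝ)) hxx').trans (hτ hx'))
      exact mul_right_cancel₀ hg.ne' this
    subst htt
    have hss : s = s' := (fract_eq_of_coe3_eq hc hs₀ hs₁ hx).symm.trans
      (fract_eq_of_coe3_eq hc hs₀' hs₁' hx')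
    exact coe3_injective_s5 (by rw [hx, hx', hss])
  · rintro l ⟨hl₀, hl₁⟩
    obtain ⟨x, hx⟩ := exists_coe3_eq_fract_smul_add_smul hc hg₀ dvd_rfl l
    refine ⟨x, ⟨_, _, Int.fract_nonneg _, Int.fract_lt_one _, by positivity,
      (div_lt_one hg).2 (by exact_mod_cast hl₁), hx⟩, ?_⟩
    have := hτ hx
    rw [div_mul_cancel₀ _ hg.ne'] at this
    exact_mod_cast this

end Counting

end

lemma dvd_gcd_mul_of_mul_dvd {x y z m f : ℕ} (hx : x ≠ 0) (hy : y ≠ 0) (hxz : x * z ∣ m)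
    (hyz : y * z ∣ m) (hm : m = x * y * f) : z ∣ Nat.gcd x y * f := by
  have hm' : m = Nat.lcm x y * (Nat.gcd x y * f) := by
    rw [hm, ← mul_assoc, mul_comm (Nat.lcm x y), Nat.gcd_mul_lcm]
  have hlcm : Nat.lcm x y * z ∣ m := Nat.lcm_mul_right x z y ▸ Nat.lcm_dvd hxz hyz
  rw [hm'] at hlcm
  exact Nat.dvd_of_mul_dvd_mul_left (Nat.pos_of_ne_zero (Nat.lcm_ne_zero hx hy)) hlcm

theorem gcd_divisibility_relations_general (w₁ w₂ w₃ : Fin 3 → ℤ)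
    (hp₁ : IsPrimitive w₁) (hp₂ : IsPrimitive w₂) (hp₃ : IsPrimitive w₃)
    (hli : LinearIndependent ℝ ![coe3 w₁, coe3 w₂, coe3 w₃])
    (μ μ₁ μ₂ μ₃ : ℕ)
    (hμ₁ : μ₁ = (H2pts w₂ w₃).ncard) (hμ₂ : μ₂ = (H2pts w₁ w₃).ncard)
    (hμ₃ : μ₃ = (H2pts w₁ w₂).ncard)
    (φ₁ φ₂ φ₃ : ℕ)
    (hφ₁ : μ = μ₂ * μ₃ * φ₁) (hφ₂ : μ = μ₁ * μ₃ * φ₂) (hφ₃ : μ = μ₁ * μ₂ * φ₃) :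
    (Nat.gcd μ₁ μ₂ ∣ μ₃ ∧ μ₃ ∣ Nat.gcd μ₁ μ₂ * φ₃ ∧
      Nat.gcd (Nat.gcd μ₁ μ₂) μ₃ = Nat.gcd μ₁ μ₂) ∧
    (Nat.gcd μ₁ μ₃ ∣ μ₂ ∧ μ₂ ∣ Nat.gcd μ₁ μ₃ * φ₂ ∧
      Nat.gcd (Nat.gcd μ₁ μ₃) μ₂ = Nat.gcd μ₁ μ₃) ∧
    (Nat.gcd μ₂ μ₃ ∣ μ₁ ∧ μ₁ ∣ Nat.gcd μ₂ μ₃ * φ₁ ∧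
      Nat.gcd (Nat.gcd μ₂ μ₃) μ₁ = Nat.gcd μ₂ μ₃) := by
  have h₁₂ := cross_ne_zero_of_linearIndependent (hli.pair (i := 0) (j := 1) (by decide))
  have h₁₃ := cross_ne_zero_of_linearIndependent (hli.pair (i := 0) (j := 2) (by decide))
  have h₂₃ := cross_ne_zero_of_linearIndependent (hli.pair (i := 1) (j := 2) (by decide))
  have e₁ : μ₁ = content3 (crossProduct w₂ w₃) := hμ₁.trans (ncard_H2pts_s5 hp₂ h₂₃)
  have e₂ : μ₂ = content3 (crossProduct w₁ w₃) := hμ₂.trans (ncard_H2pts_s5 hp₁ h₁₃)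
  have e₃ : μ₃ = content3 (crossProduct w₁ w₂) := hμ₃.trans (ncard_H2pts_s5 hp₁ h₁₂)
  have ne₁ : μ₁ ≠ 0 := e₁ ▸ mt content3_eq_zero_iff.1 h₂₃
  have ne₂ : μ₂ ≠ 0 := e₂ ▸ mt content3_eq_zero_iff.1 h₁₃
  have ne₃ : μ₃ ≠ 0 := e₃ ▸ mt content3_eq_zero_iff.1 h₁₂
  have d₃ : Nat.gcd μ₁ μ₂ ∣ μ₃ := by
    rw [Nat.gcd_comm, e₁, e₂, e₃, content3_cross_comm w₁ w₃, content3_cross_comm w₂ w₃]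
    exact gcd_content3_cross_dvd hp₃
  have d₂ : Nat.gcd μ₁ μ₃ ∣ μ₂ := by
    rw [Nat.gcd_comm, e₁, e₂, e₃, content3_cross_comm w₁ w₂]
    exact gcd_content3_cross_dvd hp₂
  have d₁ : Nat.gcd μ₂ μ₃ ∣ μ₁ := by
    rw [Nat.gcd_comm, e₁, e₂, e₃]
    exact gcd_content3_cross_dvd hp₁
  refine ⟨⟨d₃, ?_, Nat.gcd_eq_left d₃⟩, ⟨d₂, ?_, Nat.gcd_eq_left d₂⟩, ⟨d₁, ?_, Nat.gcd_eq_left d₁⟩⟩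
  · exact dvd_gcd_mul_of_mul_dvd ne₁ ne₂ ⟨φ₂, hφ₂⟩ ⟨φ₁, hφ₁⟩ hφ₃
  · exact dvd_gcd_mul_of_mul_dvd ne₁ ne₃ ⟨φ₃, hφ₃⟩ ⟨φ₁, by rw [hφ₁]; ring⟩ hφ₂
  · exact dvd_gcd_mul_of_mul_dvd ne₂ ne₃ ⟨φ₃, by rw [hφ₃]; ring⟩ ⟨φ₂, by rw [hφ₂]; ring⟩ hφ₁

/-- Write `μ = μ₁μ₂φ₃` with `φ₃` a positive integer (possible since
`μ₁μ₂ ∣ μ`).  Then `gcd(μ₁,μ₂) ∣ μ₃` and `μ₃ ∣ gcd(μ₁,μ₂)·φ₃`; consequently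
`gcd(μ₁,μ₂,μ₃) = gcd(μ₁,μ₂)`.  The same holds for the other two combinations of two out of the
three multiplicities `μ₁, μ₂, μ₃`. -/
theorem gcd_divisibility_relations (w₁ w₂ w₃ : Fin 3 → ℤ)
    (hnn₁ : ∀ i, 0 ≤ w₁ i) (hnn₂ : ∀ i, 0 ≤ w₂ i) (hnn₃ : ∀ i, 0 ≤ w₃ i)
    (hp₁ : IsPrimitive w₁) (hp₂ : IsPrimitive w₂) (hp₃ : IsPrimitive w₃)
    (hli : LinearIndependent ℝ ![coe3 w₁, coe3 w₂, coe3 w₃])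
    (μ μ₁ μ₂ μ₃ : ℕ)
    (hμ : μ = (H3pts w₁ w₂ w₃).ncard)
    (hμ₁ : μ₁ = (H2pts w₂ w₃).ncard) (hμ₂ : μ₂ = (H2pts w₁ w₃).ncard)
    (hμ₃ : μ₃ = (H2pts w₁ w₂).ncard)
    (φ₁ φ₂ φ₃ : ℕ) (hφ₁pos : 0 < φ₁) (hφ₂pos : 0 < φ₂) (hφ₃pos : 0 < φ₃)
    (hφ₁ : μ = μ₂ * μ₃ * φ₁) (hφ₂ : μ = μ₁ * μ₃ * φ₂) (hφ₃ : μ = μ₁ * μ₂ * φ₃) :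
    (Nat.gcd μ₁ μ₂ ∣ μ₃ ∧ μ₃ ∣ Nat.gcd μ₁ μ₂ * φ₃ ∧
      Nat.gcd (Nat.gcd μ₁ μ₂) μ₃ = Nat.gcd μ₁ μ₂) ∧
    (Nat.gcd μ₁ μ₃ ∣ μ₂ ∧ μ₂ ∣ Nat.gcd μ₁ μ₃ * φ₂ ∧
      Nat.gcd (Nat.gcd μ₁ μ₃) μ₂ = Nat.gcd μ₁ μ₃) ∧
    (Nat.gcd μ₂ μ₃ ∣ μ₁ ∧ μ₁ ∣ Nat.gcd μ₂ μ₃ * φ₁ ∧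
      Nat.gcd (Nat.gcd μ₂ μ₃) μ₁ = Nat.gcd μ₂ μ₃) :=
  gcd_divisibility_relations_general w₁ w₂ w₃ hp₁ hp₂ hp₃ hli μ μ₁ μ₂ μ₃ hμ₁ hμ₂ hμ₃ φ₁ φ₂ φ₃ hφ₁
    hφ₂ hφ₃

end
end

section
/- Let μ₁ and μ₂ be positive integers, γ = gcd(μ₁,μ₂) and λ = lcm(μ₁,μ₂). Then the values {(jμ₁ + iμ₂) mod μ₁μ₂ : 0 ≤ i < μ₁, 0 ≤ j < μ₂} are exactly the λ multiples 0, γ, 2γ, …, μ₁μ₂ − γ of γ in [0, μ₁μ₂), and for each l ∈ {0, …, λ−1} there are exactly γ pairs (i,j) with 0 ≤ i < μ₁, 0 ≤ j < μ₂ and (jμ₁ + iμ₂) ≡ lγ (mod μ₁μ₂). -/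
/-!
The map `(i, j) ↦ j μ₁ + i μ₂` is an additive homomorphism
`φ : ZMod μ₁ × ZMod μ₂ → ZMod (μ₁ μ₂)`, and `[0, μ₁) × [0, μ₂)` is a set of representatives of its
domain. By Bézout the image of `φ` is the subgroup generated by `γ`, which has order
`μ₁ μ₂ / γ = λ`; so every fibre over the image is a coset of the kernel, of order `μ₁ μ₂ / λ = γ`.
-/

open AddSubgroup

namespace ZMod

def scaleHom {m n : ℕ} (k : ℕ) (h : ((m * k : ℕ) : ZMod n) = 0) : ZMod m →+ ZMod n :=
  ZMod.lift m ⟨zmultiplesHom (ZMod n) (k : ZMod n), by simpa using h⟩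

@[simp]
lemma scaleHom_intCast {m n k : ℕ} (h : ((m * k : ℕ) : ZMod n) = 0) (x : ℤ) :
    scaleHom k h x = x * k := by
  simp [scaleHom]

lemma natCast_mem_zmultiples_natCast_iff {N d : ℕ} (hd : d ∣ N) (n : ℕ) :
    (n : ZMod N) ∈ zmultiples (d : ZMod N) ↔ d ∣ n := by
  refine ⟨fun h => ?_, fun ⟨c, hc⟩ => ⟨c, by simp [hc, mul_comm]⟩⟩
  obtain ⟨k, hk⟩ := mem_zmultiples_iff.1 h
  rw [← ZMod.natCast_eq_zero_iff]
  calc (n : ZMod d) = ZMod.castHom hd (ZMod d) (k • (d : ZMod N)) := by rw [hk, map_natCast]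
    _ = 0 := by rw [map_zsmul, map_natCast, ZMod.natCast_self, smul_zero]

lemma val_image_zmultiples_natCast {N d : ℕ} [NeZero N] (hd : d ∣ N) :
    ZMod.val '' (zmultiples (d : ZMod N) : Set (ZMod N)) = {n | n < N ∧ d ∣ n} := by
  ext n
  constructor
  · rintro ⟨y, hy, rfl⟩
    rw [SetLike.mem_coe, ← natCast_zmod_val y, natCast_mem_zmultiples_natCast_iff hd] at hy
    exact ⟨val_lt y, hy⟩
  · rintro ⟨hn, hdn⟩
    exact ⟨n, (natCast_mem_zmultiples_natCast_iff hd n).2 hdn, val_cast_of_lt hn⟩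

end ZMod

lemma AddMonoidHom.ncard_preimage_singleton {G H : Type*} [AddGroup G] [AddGroup H] (f : G →+ H)
    {y : H} (hy : y ∈ f.range) : (f ⁻¹' {y}).ncard = Nat.card f.ker := by
  obtain ⟨x, rfl⟩ := hy
  have hfiber : f ⁻¹' {f x} = (x + ·) '' (f.ker : Set G) := by
    ext z
    simp only [Set.mem_preimage, Set.mem_singleton_iff, Set.image_add_left, SetLike.mem_coe,
      AddMonoidHom.mem_ker, map_add, map_neg, neg_add_eq_zero]
    exact eq_comm
  rw [hfiber, Set.ncard_image_of_injective _ (add_right_injective x)]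
  exact (Nat.card_coe_set_eq _).symm

section LinComb

variable (μ₁ μ₂ : ℕ)

def linCombHom : ZMod μ₁ × ZMod μ₂ →+ ZMod (μ₁ * μ₂) :=
  (ZMod.scaleHom μ₂ (by simp)).comp (AddMonoidHom.fst _ _) +
    (ZMod.scaleHom μ₁ (by simp [mul_comm])).comp (AddMonoidHom.snd _ _)

lemma linCombHom_intCast (i j : ℤ) :
    linCombHom μ₁ μ₂ (i, j) = j * μ₁ + i * μ₂ := by
  simp [linCombHom, add_comm]

lemma range_linCombHom :
    (linCombHom μ₁ μ₂).range = zmultiples (Nat.gcd μ₁ μ₂ : ZMod (μ₁ * μ₂)) := by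
  apply le_antisymm
  · rintro _ ⟨⟨x, y⟩, rfl⟩
    obtain ⟨i, rfl⟩ := ZMod.intCast_surjective x
    obtain ⟨j, rfl⟩ := ZMod.intCast_surjective y
    obtain ⟨c, hc⟩ : (Nat.gcd μ₁ μ₂ : ℤ) ∣ j * μ₁ + i * μ₂ :=
      dvd_add (dvd_mul_of_dvd_right (Int.natCast_dvd_natCast.2 (Nat.gcd_dvd_left _ _)) _)
        (dvd_mul_of_dvd_right (Int.natCast_dvd_natCast.2 (Nat.gcd_dvd_right _ _)) _)
    refine mem_zmultiples_iff.2 ⟨c, ?_⟩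
    have h := congrArg (Int.cast : ℤ → ZMod (μ₁ * μ₂)) (hc.trans (mul_comm _ _))
    push_cast at h
    rw [linCombHom_intCast, h, zsmul_eq_mul]
  · rw [zmultiples_le]
    refine ⟨(Nat.gcdB μ₁ μ₂, Nat.gcdA μ₁ μ₂), ?_⟩
    have h := congrArg (Int.cast : ℤ → ZMod (μ₁ * μ₂)) (Nat.gcd_eq_gcd_ab μ₁ μ₂)
    push_cast at h
    rw [linCombHom_intCast, h]
    ring

lemma card_ker_linCombHom (h₁ : μ₁ ≠ 0) (h₂ : μ₂ ≠ 0) :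
    Nat.card (linCombHom μ₁ μ₂).ker = Nat.gcd μ₁ μ₂ := by
  have hcard := (linCombHom μ₁ μ₂).ker.card_mul_index
  rw [index_ker, range_linCombHom, Nat.card_zmultiples, ZMod.addOrderOf_coe _ (by positivity),
    Nat.card_prod, Nat.card_zmod, Nat.card_zmod,
    Nat.gcd_eq_right ((Nat.gcd_dvd_left μ₁ μ₂).mul_right μ₂)] at hcard
  exact Nat.eq_of_mul_eq_mul_right (Nat.lcm_pos (Nat.pos_of_ne_zero h₁) (Nat.pos_of_ne_zero h₂))
    (hcard.trans (Nat.gcd_mul_lcm μ₁ μ₂).symm)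

lemma linCombHom_natCast (i j : ℕ) :
    linCombHom μ₁ μ₂ (i, j) = ((j * μ₁ + i * μ₂ : ℕ) : ZMod (μ₁ * μ₂)) := by
  simpa using linCombHom_intCast μ₁ μ₂ i j

variable [NeZero μ₁] [NeZero μ₂]

lemma linCombHom_apply (x : ZMod μ₁ × ZMod μ₂) :
    linCombHom μ₁ μ₂ x = ((x.2.val * μ₁ + x.1.val * μ₂ : ℕ) : ZMod (μ₁ * μ₂)) := by
  simpa using linCombHom_natCast μ₁ μ₂ x.1.val x.2.val

lemma setOf_mod_eq_image_val_range_linCombHom :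
    {n : ℕ | ∃ i < μ₁, ∃ j < μ₂, n = (j * μ₁ + i * μ₂) % (μ₁ * μ₂)} =
      ZMod.val '' ((linCombHom μ₁ μ₂).range : Set (ZMod (μ₁ * μ₂))) := by
  ext n
  constructor
  · rintro ⟨i, -, j, -, rfl⟩
    exact ⟨_, ⟨(i, j), rfl⟩, by rw [linCombHom_natCast, ZMod.val_natCast]⟩
  · rintro ⟨_, ⟨x, rfl⟩, rfl⟩
    exact ⟨x.1.val, x.1.val_lt, x.2.val, x.2.val_lt, by rw [linCombHom_apply, ZMod.val_natCast]⟩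

lemma setOf_modEq_eq_image_preimage_linCombHom (v : ℕ) :
    {q : ℕ × ℕ | q.1 < μ₁ ∧ q.2 < μ₂ ∧ q.2 * μ₁ + q.1 * μ₂ ≡ v [MOD μ₁ * μ₂]} =
      Prod.map ZMod.val ZMod.val '' (linCombHom μ₁ μ₂ ⁻¹' {(v : ZMod (μ₁ * μ₂))}) := by
  ext ⟨i, j⟩
  constructor
  · rintro ⟨hi, hj, hv⟩
    refine ⟨((i : ZMod μ₁), (j : ZMod μ₂)), ?_, ?_⟩
    · simpa [linCombHom_natCast] using (ZMod.natCast_eq_natCast_iff _ _ _).2 hv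
    · simp [ZMod.val_cast_of_lt hi, ZMod.val_cast_of_lt hj]
  · rintro ⟨x, hx, hq⟩
    obtain ⟨rfl, rfl⟩ := Prod.ext_iff.1 hq
    exact ⟨x.1.val_lt, x.2.val_lt,
      (ZMod.natCast_eq_natCast_iff _ _ _).1 ((linCombHom_apply μ₁ μ₂ x).symm.trans hx)⟩

end LinComb

lemma Nat.setOf_lt_mul_and_dvd {d L : ℕ} (hd : 0 < d) :
    {n : ℕ | n < d * L ∧ d ∣ n} = {n | ∃ l < L, n = l * d} := by
  ext n
  constructor
  · rintro ⟨hn, l, rfl⟩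
    exact ⟨l, Nat.lt_of_mul_lt_mul_left hn, mul_comm d l⟩
  · rintro ⟨l, hl, rfl⟩
    exact ⟨mul_comm L d ▸ Nat.mul_lt_mul_of_pos_right hl hd, dvd_mul_left d l⟩

/-- Let `μ₁` and `μ₂` be positive integers, `γ = gcd(μ₁,μ₂)` and
`λ = lcm(μ₁,μ₂)`. Then the values `(jμ₁ + iμ₂) mod μ₁μ₂` for `0 ≤ i < μ₁`, `0 ≤ j < μ₂`
are exactly the `λ` multiples `0, γ, 2γ, …, μ₁μ₂ − γ` of `γ` in `[0, μ₁μ₂)`, and each such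
value `lγ` is attained for exactly `γ` pairs `(i, j)`. -/
theorem values_of_j_mu1_plus_i_mu2_mod_mu1mu2 (μ₁ μ₂ : ℕ) (h₁ : 0 < μ₁) (h₂ : 0 < μ₂) :
    ({n : ℕ | ∃ i < μ₁, ∃ j < μ₂, n = (j * μ₁ + i * μ₂) % (μ₁ * μ₂)} =
      {n : ℕ | ∃ l < Nat.lcm μ₁ μ₂, n = l * Nat.gcd μ₁ μ₂}) ∧
    ∀ l < Nat.lcm μ₁ μ₂,
      {q : ℕ × ℕ | q.1 < μ₁ ∧ q.2 < μ₂ ∧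
          q.2 * μ₁ + q.1 * μ₂ ≡ l * Nat.gcd μ₁ μ₂ [MOD μ₁ * μ₂]}.ncard =
        Nat.gcd μ₁ μ₂ := by
  have := NeZero.of_pos h₁
  have := NeZero.of_pos h₂
  have hgcd : Nat.gcd μ₁ μ₂ ∣ μ₁ * μ₂ := (Nat.gcd_dvd_left μ₁ μ₂).mul_right μ₂
  refine ⟨?_, fun l _ => ?_⟩
  · rw [setOf_mod_eq_image_val_range_linCombHom, range_linCombHom,
      ZMod.val_image_zmultiples_natCast hgcd]
    simpa only [Nat.gcd_mul_lcm] using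
      Nat.setOf_lt_mul_and_dvd (L := Nat.lcm μ₁ μ₂) (Nat.gcd_pos_of_pos_left μ₂ h₁)
  · have hmem : ((l * Nat.gcd μ₁ μ₂ : ℕ) : ZMod (μ₁ * μ₂)) ∈ (linCombHom μ₁ μ₂).range := by
      rw [range_linCombHom, ZMod.natCast_mem_zmultiples_natCast_iff hgcd]
      exact dvd_mul_left _ _
    rw [setOf_modEq_eq_image_preimage_linCombHom,
      Set.ncard_image_of_injective _ ((ZMod.val_injective _).prodMap (ZMod.val_injective _)),
      AddMonoidHom.ncard_preimage_singleton _ hmem, card_ker_linCombHom μ₁ μ₂ h₁.ne' h₂.ne']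
end

section
/- Let w₂ = (a₂,b₂,c₂) and w₃ = (a₃,b₃,c₃) be ℝ-linearly independent primitive vectors in ℤ≥0³, and let μ₁ = gcd(|b₂c₃−b₃c₂|, |a₂c₃−a₃c₂|, |a₂b₃−a₃b₂|). Then gcd(a₂, μ₁) = gcd(a₃, μ₁); similarly gcd(b₂, μ₁) = gcd(b₃, μ₁) and gcd(c₂, μ₁) = gcd(c₃, μ₁). -/
/-!
If the coordinates of `v` generate the unit ideal, then `1 = ∑ u j * v j`, so
`w i = ∑ u j * (v j * w i)`. Each `v j * w i` differs from `v i * w j` by a `2 × 2` minor, so any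
common divisor of `v i` and of all the minors divides `w i`. Hence `gcd (v i) μ ∣ gcd (w i) μ`
when `μ` divides the minors, and the reverse divisibility follows by symmetry.
-/

theorem dvd_of_dvd_of_dvd_minors {R ι : Type*} [CommRing R] [Fintype ι] {v w : ι → R} {k : R}
    (hv : Ideal.span (Set.range v) = ⊤) (i : ι) (hk : ∀ j, k ∣ v i * w j - v j * w i)
    (hki : k ∣ v i) : k ∣ w i := by
  obtain ⟨u, hu⟩ := Ideal.mem_span_range_iff_exists_fun.mp ((Ideal.eq_top_iff_one _).mp hv)
  have hcross : ∀ j, k ∣ v j * w i := fun j => by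
    simpa using dvd_sub (hki.mul_right (w j)) (hk j)
  calc k ∣ ∑ j, u j * (v j * w i) := Finset.dvd_sum fun j _ => (hcross j).mul_left (u j)
    _ = w i := by simp only [← mul_assoc, ← Finset.sum_mul, hu, one_mul]

theorem Int.gcd_dvd_gcd_of_dvd_minors {ι : Type*} [Fintype ι] {v w : ι → ℤ} {m : ℤ}
    (hv : Ideal.span (Set.range v) = ⊤) (i : ι) (hm : ∀ j, m ∣ v i * w j - v j * w i) :
    Int.gcd (v i) m ∣ Int.gcd (w i) m := by
  refine Int.natCast_dvd_natCast.mp (Int.dvd_coe_gcd ?_ (Int.gcd_dvd_right _ _))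
  exact dvd_of_dvd_of_dvd_minors hv i (fun j => (Int.gcd_dvd_right _ _).trans (hm j))
    (Int.gcd_dvd_left _ _)

theorem Int.gcd_eq_gcd_of_dvd_minors {ι : Type*} [Fintype ι] {v w : ι → ℤ} {m : ℤ}
    (hv : Ideal.span (Set.range v) = ⊤) (hw : Ideal.span (Set.range w) = ⊤)
    (hm : ∀ i j, m ∣ v i * w j - v j * w i) (i : ι) :
    Int.gcd (v i) m = Int.gcd (w i) m := by
  refine Nat.dvd_antisymm (Int.gcd_dvd_gcd_of_dvd_minors hv i (hm i)) ?_
  refine Int.gcd_dvd_gcd_of_dvd_minors hw i fun j => ?_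
  rw [mul_comm (w i), mul_comm (w j), dvd_sub_comm]
  exact hm i j

theorem Int.span_range_eq_top_of_gcd_eq_one {a b c : ℤ} (h : Int.gcd a (Int.gcd b c) = 1) :
    Ideal.span (Set.range ![a, b, c]) = ⊤ := by
  rw [Ideal.eq_top_iff_one, Ideal.mem_span_range_iff_exists_fun]
  refine ⟨![a.gcdA (b.gcd c), b.gcdA c * a.gcdB (b.gcd c), b.gcdB c * a.gcdB (b.gcd c)], ?_⟩
  have hbc := Int.gcd_eq_gcd_ab b c
  have habc := Int.gcd_eq_gcd_ab a (b.gcd c)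
  rw [h] at habc
  simp only [Fin.sum_univ_three, Matrix.cons_val_zero, Matrix.cons_val_one, Matrix.cons_val_two,
    Matrix.head_cons, Matrix.tail_cons]
  linear_combination -habc - a.gcdB (b.gcd c) * hbc

theorem gcd_coordinates_with_mu1_general (a₂ b₂ c₂ a₃ b₃ c₃ : ℤ)
    (hprim₂ : Int.gcd a₂ (Int.gcd b₂ c₂) = 1)
    (hprim₃ : Int.gcd a₃ (Int.gcd b₃ c₃) = 1)
    (μ₁ : ℕ)
    (hμ₁ : μ₁ = Int.gcd (b₂ * c₃ - b₃ * c₂) (Int.gcd (a₂ * c₃ - a₃ * c₂) (a₂ * b₃ - a₃ * b₂))) :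
    Int.gcd a₂ (μ₁ : ℤ) = Int.gcd a₃ (μ₁ : ℤ) ∧
    Int.gcd b₂ (μ₁ : ℤ) = Int.gcd b₃ (μ₁ : ℤ) ∧
    Int.gcd c₂ (μ₁ : ℤ) = Int.gcd c₃ (μ₁ : ℤ) := by
  have hbc : (μ₁ : ℤ) ∣ b₂ * c₃ - b₃ * c₂ := hμ₁ ▸ Int.gcd_dvd_left _ _
  have hac : (μ₁ : ℤ) ∣ a₂ * c₃ - a₃ * c₂ :=
    hμ₁ ▸ (Int.gcd_dvd_right _ _).trans (Int.gcd_dvd_left _ _)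
  have hab : (μ₁ : ℤ) ∣ a₂ * b₃ - a₃ * b₂ :=
    hμ₁ ▸ (Int.gcd_dvd_right _ _).trans (Int.gcd_dvd_right _ _)
  have hminors : ∀ i j, (μ₁ : ℤ) ∣
      ![a₂, b₂, c₂] i * ![a₃, b₃, c₃] j - ![a₂, b₂, c₂] j * ![a₃, b₃, c₃] i := by
    have hcb := dvd_sub_comm.mp hbc
    have hca := dvd_sub_comm.mp hac
    have hba := dvd_sub_comm.mp hab
    intro i j
    -- each of the nine entries is `0` or `±` one of the three minors
    fin_cases i <;> fin_cases j <;> simp <;> ring_nf at * <;> assumption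
  have hgcd := Int.gcd_eq_gcd_of_dvd_minors (Int.span_range_eq_top_of_gcd_eq_one hprim₂)
    (Int.span_range_eq_top_of_gcd_eq_one hprim₃) hminors
  exact ⟨hgcd 0, hgcd 1, hgcd 2⟩

/-- Let `w₂ = (a₂,b₂,c₂)` and `w₃ = (a₃,b₃,c₃)` be ℝ-linearly independent
primitive vectors in `ℤ≥0³`, and let
`μ₁ = gcd(|b₂c₃−b₃c₂|, |a₂c₃−a₃c₂|, |a₂b₃−a₃b₂|)`.
Then `gcd(a₂, μ₁) = gcd(a₃, μ₁)`, `gcd(b₂, μ₁) = gcd(b₃, μ₁)` and `gcd(c₂, μ₁) = gcd(c₃, μ₁)`. -/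
theorem gcd_coordinates_with_mu1 (a₂ b₂ c₂ a₃ b₃ c₃ : ℤ)
    (ha₂ : 0 ≤ a₂) (hb₂ : 0 ≤ b₂) (hc₂ : 0 ≤ c₂)
    (ha₃ : 0 ≤ a₃) (hb₃ : 0 ≤ b₃) (hc₃ : 0 ≤ c₃)
    (hprim₂ : Int.gcd a₂ (Int.gcd b₂ c₂) = 1)
    (hprim₃ : Int.gcd a₃ (Int.gcd b₃ c₃) = 1)
    (hli : LinearIndependent ℝ ![![(a₂ : ℝ), (b₂ : ℝ), (c₂ : ℝ)], ![(a₃ : ℝ), (b₃ : ℝ), (c₃ : ℝ)]])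
    (μ₁ : ℕ)
    (hμ₁ : μ₁ = Int.gcd (b₂ * c₃ - b₃ * c₂) (Int.gcd (a₂ * c₃ - a₃ * c₂) (a₂ * b₃ - a₃ * b₂))) :
    Int.gcd a₂ (μ₁ : ℤ) = Int.gcd a₃ (μ₁ : ℤ) ∧
    Int.gcd b₂ (μ₁ : ℤ) = Int.gcd b₃ (μ₁ : ℤ) ∧
    Int.gcd c₂ (μ₁ : ℤ) = Int.gcd c₃ (μ₁ : ℤ) :=
  gcd_coordinates_with_mu1_general a₂ b₂ c₂ a₃ b₃ c₃ hprim₂ hprim₃ μ₁ hμ₁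
end

section
/- Let A = (x_A, y_A, 0), B = (x_B, y_B, 0), C = (x_C, y_C, 1) be points of ℤ³ with A ≠ B, and let f_AB = gcd(x_B − x_A, y_B − y_A) > 0. Let v₀ = (a₀,b₀,c₀), v₁ = (a₁,b₁,c₁), v₂ = (a₂,b₂,c₂) ∈ ℤ³ satisfy v₀·(C−A) = v₀·(C−B) = 0, v₁·(C−B) = 0, v₂·(C−A) = 0, and suppose B − A = f_AB·(−b₀, a₀, 0). Then the determinant of the 3×3 matrix with rows v₀, v₁, v₂ equals (a₀b₂ − a₂b₀)·(a₁b₀ − a₀b₁)·f_AB. (In the notation of Case I: μ_C = μ_A·μ_B·f_AB.) -/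
/-- Let `A = (x_A, y_A, 0)`, `B = (x_B, y_B, 0)`, `C = (x_C, y_C, 1)` be points
of `ℤ³` with `A ≠ B`, and let `f_AB = gcd(x_B − x_A, y_B − y_A) > 0`.  Let
`v₀ = (a₀,b₀,c₀)`, `v₁ = (a₁,b₁,c₁)`, `v₂ = (a₂,b₂,c₂) ∈ ℤ³` satisfy
`v₀·(C−A) = v₀·(C−B) = 0`, `v₁·(C−B) = 0`, `v₂·(C−A) = 0`, and suppose
`B − A = f_AB·(−b₀, a₀, 0)`.  Then the determinant of the 3×3 matrix with rows `v₀, v₁, v₂`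
equals `(a₀b₂ − a₂b₀)·(a₁b₀ − a₀b₁)·f_AB`.  (In the notation of Case I: `μ_C = μ_A·μ_B·f_AB`.) -/
theorem det_eq_muA_mul_muB_mul_fAB (xA yA xB yB xC yC : ℤ)
    (hAB : (xA, yA) ≠ (xB, yB))
    (fAB : ℕ) (hfAB : fAB = Int.gcd (xB - xA) (yB - yA))
    (a₀ b₀ c₀ a₁ b₁ c₁ a₂ b₂ c₂ : ℤ)
    (h0A : a₀ * (xC - xA) + b₀ * (yC - yA) + c₀ * 1 = 0)
    (h0B : a₀ * (xC - xB) + b₀ * (yC - yB) + c₀ * 1 = 0)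
    (h1B : a₁ * (xC - xB) + b₁ * (yC - yB) + c₁ * 1 = 0)
    (h2A : a₂ * (xC - xA) + b₂ * (yC - yA) + c₂ * 1 = 0)
    (hdirx : xB - xA = (fAB : ℤ) * (-b₀))
    (hdiry : yB - yA = (fAB : ℤ) * a₀) :
    Matrix.det !![a₀, b₀, c₀; a₁, b₁, c₁; a₂, b₂, c₂] =
      (a₀ * b₂ - a₂ * b₀) * (a₁ * b₀ - a₀ * b₁) * (fAB : ℤ) := by
  have hdet : Matrix.det !![a₀, b₀, c₀; a₁, b₁, c₁; a₂, b₂, c₂] =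
      a₀ * (b₁ * c₂ - c₁ * b₂) - b₀ * (a₁ * c₂ - c₁ * a₂) + c₀ * (a₁ * b₂ - b₁ * a₂) := by
    simp [Matrix.det_fin_three]; ring
  rw [hdet]
  linear_combination (a₁*b₂-a₂*b₁) * h0A + (a₂*b₀-a₀*b₂) * h1B + (a₀*b₁-a₁*b₀) * h2A +
    a₁*(a₂*b₀-a₀*b₂) * hdirx + b₁*(a₂*b₀-a₀*b₂) * hdiry
end

section
/- Let v₀, v₁, v₂ ∈ ℤ³ with v₀ primitive, let μ_A and μ_B be positive integers, and let ξ_A, ξ_B, Ψ be integers such that ξ_A·v₀ + v₂ ∈ μ_A·ℤ³, ξ_B·v₀ + v₁ ∈ μ_B·ℤ³, and Ψ·v₀ − μ_A·v₁ − μ_B·v₂ ∈ μ_Aμ_B·ℤ³. Then μ_Aμ_B divides ξ_Aμ_B + ξ_Bμ_A + Ψ. -/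
/-- Let `v₀, v₁, v₂ ∈ ℤ³` with `v₀` primitive, let `μ_A` and `μ_B` be positive
integers, and let `ξ_A, ξ_B, Ψ` be integers such that `ξ_A·v₀ + v₂ ∈ μ_A·ℤ³`,
`ξ_B·v₀ + v₁ ∈ μ_B·ℤ³`, and `Ψ·v₀ − μ_A·v₁ − μ_B·v₂ ∈ μ_Aμ_B·ℤ³`.
Then `μ_Aμ_B` divides `ξ_Aμ_B + ξ_Bμ_A + Ψ`. -/
theorem muAmuB_dvd_xiA_muB_add_xiB_muA_add_psi (v₀ v₁ v₂ : Fin 3 → ℤ)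
    (hprim : Int.gcd (v₀ 0) (Int.gcd (v₀ 1) (v₀ 2)) = 1)
    (μA μB : ℕ) (hμA : 0 < μA) (hμB : 0 < μB)
    (ξA ξB Ψ : ℤ)
    (h₁ : ∀ i, (μA : ℤ) ∣ (ξA * v₀ i + v₂ i))
    (h₂ : ∀ i, (μB : ℤ) ∣ (ξB * v₀ i + v₁ i))
    (h₃ : ∀ i, ((μA : ℤ) * (μB : ℤ)) ∣ (Ψ * v₀ i - (μA : ℤ) * v₁ i - (μB : ℤ) * v₂ i)) :
    ((μA : ℤ) * (μB : ℤ)) ∣ (ξA * (μB : ℤ) + ξB * (μA : ℤ) + Ψ) := by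
  set K : ℤ := ξA * (μB : ℤ) + ξB * (μA : ℤ) + Ψ with hK
  have hi : ∀ i, ((μA : ℤ) * (μB : ℤ)) ∣ K * v₀ i := by
    intro i
    obtain ⟨a, ha⟩ := h₁ i
    obtain ⟨b, hb⟩ := h₂ i
    obtain ⟨c, hc⟩ := h₃ i
    refine ⟨a + b + c, ?_⟩
    have : K * v₀ i = (μB : ℤ) * (ξA * v₀ i + v₂ i) + (μA : ℤ) * (ξB * v₀ i + v₁ i)
        + (Ψ * v₀ i - (μA : ℤ) * v₁ i - (μB : ℤ) * v₂ i) := by ring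
    rw [this, ha, hb, hc]; ring
  -- Bezout
  have hg := Int.gcd_eq_gcd_ab (v₀ 1) (v₀ 2)
  have hg' := Int.gcd_eq_gcd_ab (v₀ 0) (Int.gcd (v₀ 1) (v₀ 2) : ℤ)
  have h1 : (1 : ℤ) = v₀ 0 * Int.gcdA (v₀ 0) (Int.gcd (v₀ 1) (v₀ 2) : ℤ)
      + (v₀ 1 * Int.gcdA (v₀ 1) (v₀ 2) + v₀ 2 * Int.gcdB (v₀ 1) (v₀ 2))
        * Int.gcdB (v₀ 0) (Int.gcd (v₀ 1) (v₀ 2) : ℤ) := by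
    rw [← hg]
    have : ((Int.gcd (v₀ 0) (Int.gcd (v₀ 1) (v₀ 2) : ℤ) : ℤ)) = 1 := by
      exact_mod_cast congrArg (Nat.cast : ℕ → ℤ) hprim
    rw [← this, hg']
  have : K = K * 1 := by ring
  rw [this, h1]
  have e : K * (v₀ 0 * Int.gcdA (v₀ 0) (Int.gcd (v₀ 1) (v₀ 2) : ℤ)
      + (v₀ 1 * Int.gcdA (v₀ 1) (v₀ 2) + v₀ 2 * Int.gcdB (v₀ 1) (v₀ 2))
        * Int.gcdB (v₀ 0) (Int.gcd (v₀ 1) (v₀ 2) : ℤ))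
      = (K * v₀ 0) * Int.gcdA (v₀ 0) (Int.gcd (v₀ 1) (v₀ 2) : ℤ)
      + (K * v₀ 1) * (Int.gcdA (v₀ 1) (v₀ 2) * Int.gcdB (v₀ 0) (Int.gcd (v₀ 1) (v₀ 2) : ℤ))
      + (K * v₀ 2) * (Int.gcdB (v₀ 1) (v₀ 2) * Int.gcdB (v₀ 0) (Int.gcd (v₀ 1) (v₀ 2) : ℤ)) := by
    ring
  rw [e]
  exact dvd_add (dvd_add ((hi 0).mul_right _) ((hi 1).mul_right _)) ((hi 2).mul_right _)
end

section
/- Let f_B2 > 1 and ψ̄ ∈ {1, …, f_B2 − 1} be integers with gcd(ψ̄, f_B2) = 1, let t ≥ 1 be an integer, and put ψ = t·f_B2 + ψ̄. Let f_BC ≥ 1 be an integer and f_C2 = f_B2 + f_BC·ψ. Define κ_ρ = ⌈ρ·f_B2/ψ̄⌉ for ρ = 0, …, ψ̄, and k_r = ⌈r·f_C2/ψ⌉ for r = 0, …, ψ. Then the map (ρ, κ, λ) ↦ r = κt + ρ + λ, defined on the set of triples of integers with 0 ≤ ρ ≤ ψ̄ − 1, κ_ρ ≤ κ ≤ κ_{ρ+1}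 − 1, and 0 ≤ λ ≤ t − [κ < κ_{ρ+1} − 1], is a bijection onto {0, 1, …, ψ − 1}; and for r = κt + ρ + λ written in this way, k_r = f_BC·r + κ + [λ > 0] and k_{r+1} − 1 = f_BC·(r+1) + κ. -/
private lemma ceil_div_le_iff' (a b c : ℤ) (hb : 0 < b) :
    ⌈((a : ℤ) : ℚ) / ((b : ℤ) : ℚ)⌉ ≤ c ↔ a ≤ c * b := by
  rw [Int.ceil_le, div_le_iff₀ (by exact_mod_cast hb)]
  exact_mod_cast Iff.rfl

private lemma lt_ceil_div_iff' (a b c : ℤ) (hb : 0 < b) :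
    c < ⌈((a : ℤ) : ℚ) / ((b : ℤ) : ℚ)⌉ ↔ c * b < a := by
  rw [Int.lt_ceil, lt_div_iff₀ (by exact_mod_cast hb)]
  exact_mod_cast Iff.rfl

private lemma ceil_div_eq' (a b c : ℤ) (hb : 0 < b) (h1 : (c - 1) * b < a) (h2 : a ≤ c * b) :
    ⌈((a : ℤ) : ℚ) / ((b : ℤ) : ℚ)⌉ = c := by
  have h3 : c - 1 < ⌈((a : ℤ) : ℚ) / ((b : ℤ) : ℚ)⌉ := (lt_ceil_div_iff' a b (c-1) hb).2 h1
  have h4 := (ceil_div_le_iff' a b c hb).2 h2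
  have h5 := Int.add_one_le_iff.mpr h3
  linarith

/-- Let `f_B2 > 1` and `ψ̄ ∈ {1,…,f_B2−1}` with `gcd(ψ̄, f_B2) = 1`, let
`t ≥ 1`, put `ψ = t·f_B2 + ψ̄`, let `f_BC ≥ 1` and `f_C2 = f_B2 + f_BC·ψ`.  With
`κ_ρ = ⌈ρ·f_B2/ψ̄⌉` and `k_r = ⌈r·f_C2/ψ⌉`, the map `(ρ, κ, λ) ↦ r = κt + ρ + λ`, defined on
the set of triples with `0 ≤ ρ ≤ ψ̄−1`, `κ_ρ ≤ κ ≤ κ_{ρ+1}−1`, `0 ≤ λ ≤ t − [κ < κ_{ρ+1}−1]`,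
is a bijection onto `{0, 1, …, ψ−1}`; and for `r = κt + ρ + λ` written in this way one has
`k_r = f_BC·r + κ + [λ > 0]` and `k_{r+1} − 1 = f_BC·(r+1) + κ`. -/
theorem special_form_bijection (fB2 ψb t ψ fBC fC2 : ℤ)
    (hfB2 : 1 < fB2) (hψb1 : 1 ≤ ψb) (hψb2 : ψb ≤ fB2 - 1)
    (hcop : Int.gcd ψb fB2 = 1) (ht : 1 ≤ t) (hψ : ψ = t * fB2 + ψb)
    (hfBC : 1 ≤ fBC) (hfC2 : fC2 = fB2 + fBC * ψ)
    (κ : ℤ → ℤ) (hκ : ∀ ρ, κ ρ = ⌈((ρ * fB2 : ℤ) : ℚ) / ((ψb : ℤ) : ℚ)⌉)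
    (k : ℤ → ℤ) (hk : ∀ r, k r = ⌈((r * fC2 : ℤ) : ℚ) / ((ψ : ℤ) : ℚ)⌉) :
    Set.BijOn (fun x : ℤ × ℤ × ℤ => x.2.1 * t + x.1 + x.2.2)
      {x : ℤ × ℤ × ℤ | 0 ≤ x.1 ∧ x.1 ≤ ψb - 1 ∧
        κ x.1 ≤ x.2.1 ∧ x.2.1 ≤ κ (x.1 + 1) - 1 ∧
        0 ≤ x.2.2 ∧ x.2.2 ≤ t - (if x.2.1 < κ (x.1 + 1) - 1 then 1 else 0)}
      (Set.Icc 0 (ψ - 1)) ∧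
    ∀ ρ κv lv : ℤ,
      0 ≤ ρ → ρ ≤ ψb - 1 → κ ρ ≤ κv → κv ≤ κ (ρ + 1) - 1 →
      0 ≤ lv → lv ≤ t - (if κv < κ (ρ + 1) - 1 then 1 else 0) →
      k (κv * t + ρ + lv) = fBC * (κv * t + ρ + lv) + κv + (if 0 < lv then 1 else 0) ∧
      k (κv * t + ρ + lv + 1) - 1 = fBC * (κv * t + ρ + lv + 1) + κv := by
  have hb : (0:ℤ) < ψb := hψb1
  have hF : (0:ℤ) < fB2 := by linarith
  have hψ0 : (0:ℤ) < ψ := by nlinarith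
  -- translations of κ-inequalities
  have hκ_le : ∀ ρ κv : ℤ, κ ρ ≤ κv ↔ ρ * fB2 ≤ κv * ψb := by
    intro ρ κv
    rw [hκ]
    exact ceil_div_le_iff' _ _ _ hb
  have hκ_ge : ∀ ρ κv : ℤ, κv ≤ κ ρ - 1 ↔ κv * ψb < ρ * fB2 := by
    intro ρ κv
    rw [Int.le_sub_one_iff, hκ]
    exact lt_ceil_div_iff' _ _ _ hb
  -- k in terms of windows
  have hmk : ∀ r c : ℤ, (c - 1) * ψ < r * fB2 → r * fB2 ≤ c * ψ → k r = fBC * r + c := by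
    intro r c h1 h2
    rw [hk]
    have hψq : ((ψ : ℤ) : ℚ) ≠ 0 := by exact_mod_cast hψ0.ne'
    have heq : ((r * fC2 : ℤ) : ℚ) / ((ψ : ℤ) : ℚ)
        = ((r * fB2 : ℤ) : ℚ) / ((ψ : ℤ) : ℚ) + ((fBC * r : ℤ) : ℚ) := by
      rw [hfC2]
      push_cast
      field_simp
    rw [heq, Int.ceil_add_intCast, ceil_div_eq' _ _ _ hψ0 h1 h2]
    ring
  -- the key window fact for r+1, in raw inequality form
  have winB : ∀ ρ κv lv : ℤ, 0 ≤ ρ → ρ ≤ ψb - 1 → ρ * fB2 ≤ κv * ψb →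
      κv * ψb < (ρ + 1) * fB2 → 0 ≤ lv → lv ≤ t →
      ((κv + 1) * ψb < (ρ + 1) * fB2 → lv ≤ t - 1) →
      κv * ψ < (κv * t + ρ + lv + 1) * fB2 ∧ (κv * t + ρ + lv + 1) * fB2 ≤ (κv + 1) * ψ := by
    intro ρ κv lv hρ0 hρ1 h1 h2 hl0 hlt hlt1
    subst hψ
    constructor
    · nlinarith [mul_nonneg hl0 hF.le]
    · by_cases hc : (κv + 1) * ψb < (ρ + 1) * fB2
      · have := hlt1 hc
        nlinarith [mul_nonneg (show (0:ℤ) ≤ t - 1 - lv by omega) hF.le]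
      · push_neg at hc
        nlinarith [mul_nonneg (show (0:ℤ) ≤ t - lv by omega) hF.le]
  -- the window fact for r itself
  have winA : ∀ ρ κv lv : ℤ, 0 ≤ ρ → ρ ≤ ψb - 1 → ρ * fB2 ≤ κv * ψb →
      κv * ψb < (ρ + 1) * fB2 → 0 ≤ lv → lv ≤ t →
      k (κv * t + ρ + lv) = fBC * (κv * t + ρ + lv) + κv + (if 0 < lv then 1 else 0) := by
    intro ρ κv lv hρ0 hρ1 h1 h2 hl0 hlt
    by_cases hlv : 0 < lv
    · rw [if_pos hlv]
      have e1 : (κv + 1 - 1) * ψ < (κv * t + ρ + lv) * fB2 := by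
        subst hψ; nlinarith [mul_nonneg (show (0:ℤ) ≤ lv - 1 by omega) hF.le]
      have e2 : (κv * t + ρ + lv) * fB2 ≤ (κv + 1) * ψ := by
        subst hψ; nlinarith [mul_nonneg (show (0:ℤ) ≤ t - lv by omega) hF.le]
      rw [hmk _ (κv + 1) e1 e2]; ring
    · rw [if_neg hlv]
      have hlv0 : lv = 0 := by omega
      subst hlv0
      have e1 : (κv - 1) * ψ < (κv * t + ρ + 0) * fB2 := by
        subst hψ; nlinarith [mul_nonneg (show (0:ℤ) ≤ t - 1 by omega) hF.le]
      have e2 : (κv * t + ρ + 0) * fB2 ≤ κv * ψ := by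
        subst hψ; nlinarith
      rw [hmk _ κv e1 e2]; ring
  -- translate the set conditions used in the statement
  have hiff : ∀ ρ κv : ℤ, (κv < κ (ρ + 1) - 1) ↔ (κv + 1) * ψb < (ρ + 1) * fB2 := by
    intro ρ κv
    rw [show (κv < κ (ρ + 1) - 1) ↔ (κv + 1 ≤ κ (ρ + 1) - 1) from Int.add_one_le_iff.symm]
    exact hκ_ge (ρ + 1) (κv + 1)
  have hsplit : ∀ ρ κv lv : ℤ, lv ≤ t - (if κv < κ (ρ + 1) - 1 then 1 else 0) →
      lv ≤ t ∧ ((κv + 1) * ψb < (ρ + 1) * fB2 → lv ≤ t - 1) := by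
    intro ρ κv lv h6
    by_cases hc : κv < κ (ρ + 1) - 1
    · rw [if_pos hc] at h6
      exact ⟨by omega, fun _ => by omega⟩
    · rw [if_neg hc] at h6
      refine ⟨by omega, fun hlt => absurd ((hiff ρ κv).2 hlt) hc⟩
  constructor
  · refine ⟨?_, ?_, ?_⟩
    · -- MapsTo
      rintro ⟨ρ, κv, lv⟩ hx
      simp only [Set.mem_setOf_eq] at hx
      obtain ⟨hρ0, hρ1, h3, h4, hl0, h6⟩ := hx
      have h1 : ρ * fB2 ≤ κv * ψb := (hκ_le ρ κv).1 h3
      have h2 : κv * ψb < (ρ + 1) * fB2 := (hκ_ge (ρ + 1) κv).1 h4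
      obtain ⟨hlt, _⟩ := hsplit ρ κv lv h6
      simp only [Set.mem_Icc]
      have hκ0 : 0 ≤ κv := by
        have h0 : (0:ℤ) * ψb ≤ κv * ψb := by
          have := mul_nonneg hρ0 hF.le
          linarith
        exact le_of_mul_le_mul_right h0 hb
      have hκF : κv < fB2 := by
        have hstep : (ρ + 1) * fB2 ≤ ψb * fB2 :=
          mul_le_mul_of_nonneg_right (by omega) hF.le
        have h' : κv * ψb < fB2 * ψb := by
          have := mul_comm ψb fB2
          linarith
        exact lt_of_mul_lt_mul_right h' hb.le
      constructor
      · show (0:ℤ) ≤ κv * t + ρ + lv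
        have : 0 ≤ κv * t := mul_nonneg hκ0 (by omega)
        linarith
      · show κv * t + ρ + lv ≤ ψ - 1
        have hκt : κv * t ≤ (fB2 - 1) * t := mul_le_mul_of_nonneg_right (by omega) (by omega)
        subst hψ
        nlinarith
    · -- InjOn
      rintro ⟨ρ, κv, lv⟩ hx ⟨ρ', κv', lv'⟩ hy hxy
      simp only [Set.mem_setOf_eq] at hx hy
      obtain ⟨hρ0, hρ1, h3, h4, hl0, h6⟩ := hx
      obtain ⟨hρ0', hρ1', h3', h4', hl0', h6'⟩ := hy
      have h1 : ρ * fB2 ≤ κv * ψb := (hκ_le ρ κv).1 h3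
      have h2 : κv * ψb < (ρ + 1) * fB2 := (hκ_ge (ρ + 1) κv).1 h4
      have h1' : ρ' * fB2 ≤ κv' * ψb := (hκ_le ρ' κv').1 h3'
      have h2' : κv' * ψb < (ρ' + 1) * fB2 := (hκ_ge (ρ' + 1) κv').1 h4'
      obtain ⟨hlt, hlt1⟩ := hsplit ρ κv lv h6
      obtain ⟨hlt', hlt1'⟩ := hsplit ρ' κv' lv' h6'
      have hr : κv * t + ρ + lv = κv' * t + ρ' + lv' := hxy
      obtain ⟨w1, w2⟩ := winB ρ κv lv hρ0 hρ1 h1 h2 hl0 hlt hlt1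
      obtain ⟨w1', w2'⟩ := winB ρ' κv' lv' hρ0' hρ1' h1' h2' hl0' hlt' hlt1'
      have hκeq : κv = κv' := by
        have a1 : κv * ψ < (κv' + 1) * ψ := by rw [hr] at w1; linarith
        have a2 : κv' * ψ < (κv + 1) * ψ := by rw [← hr] at w1'; linarith
        have b1 : κv < κv' + 1 := lt_of_mul_lt_mul_right a1 hψ0.le
        have b2 : κv' < κv + 1 := lt_of_mul_lt_mul_right a2 hψ0.le
        omega
      have hρeq : ρ = ρ' := by
        subst hκeq
        have a1 : ρ * fB2 < (ρ' + 1) * fB2 := by linarith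
        have a2 : ρ' * fB2 < (ρ + 1) * fB2 := by linarith
        have b1 : ρ < ρ' + 1 := lt_of_mul_lt_mul_right a1 hF.le
        have b2 : ρ' < ρ + 1 := lt_of_mul_lt_mul_right a2 hF.le
        omega
      subst hκeq; subst hρeq
      have : lv = lv' := by linarith
      simp [this]
    · -- SurjOn
      rintro r hr
      simp only [Set.mem_Icc] at hr
      obtain ⟨hr0, hr1⟩ := hr
      obtain ⟨κv, hc1, hc2⟩ : ∃ κv : ℤ, κv * ψ < (r + 1) * fB2 ∧ (r + 1) * fB2 ≤ (κv + 1) * ψ := by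
        refine ⟨⌈(((r + 1) * fB2 : ℤ) : ℚ) / ((ψ : ℤ) : ℚ)⌉ - 1, ?_, ?_⟩
        · exact (lt_ceil_div_iff' _ _ _ hψ0).1 (by omega)
        · have he : ⌈(((r + 1) * fB2 : ℤ) : ℚ) / ((ψ : ℤ) : ℚ)⌉ - 1 + 1
              = ⌈(((r + 1) * fB2 : ℤ) : ℚ) / ((ψ : ℤ) : ℚ)⌉ := by ring
          rw [he]
          exact (ceil_div_le_iff' _ _ _ hψ0).1 le_rfl
      have hκ0 : 0 ≤ κv := by
        have hpos : 0 * ψ < (κv + 1) * ψ := by nlinarith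
        have := lt_of_mul_lt_mul_right hpos hψ0.le
        omega
      obtain ⟨ρ, h1, h2⟩ : ∃ ρ : ℤ, ρ * fB2 ≤ κv * ψb ∧ κv * ψb < (ρ + 1) * fB2 := by
        refine ⟨κv * ψb / fB2, (Int.le_ediv_iff_mul_le hF).1 le_rfl, ?_⟩
        have := (Int.ediv_lt_iff_lt_mul hF).1 (lt_add_one (κv * ψb / fB2))
        linarith
      have hκF : κv < fB2 := by
        have hr2 : (r + 1) * fB2 ≤ ψ * fB2 := mul_le_mul_of_nonneg_right (by omega) hF.le
        have h' : κv * ψ < fB2 * ψ := by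
          have := mul_comm ψ fB2
          linarith
        exact lt_of_mul_lt_mul_right h' hψ0.le
      have hρ0 : 0 ≤ ρ := by
        have h0 : 0 * fB2 < (ρ + 1) * fB2 := by nlinarith
        have := lt_of_mul_lt_mul_right h0 hF.le
        omega
      have hρ1 : ρ ≤ ψb - 1 := by
        have hstep : κv * ψb ≤ (fB2 - 1) * ψb := mul_le_mul_of_nonneg_right (by omega) hb.le
        have h' : ρ * fB2 < ψb * fB2 := by nlinarith
        have := lt_of_mul_lt_mul_right h' hF.le
        omega
      set lv : ℤ := r - κv * t - ρ with hlv
      have hl0 : 0 ≤ lv := by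
        have hψexp : κv * ψ = κv * t * fB2 + κv * ψb := by rw [hψ]; ring
        have h' : (κv * t + ρ) * fB2 < (r + 1) * fB2 := by linarith [hψexp, hc1, h1]
        have := lt_of_mul_lt_mul_right h' hF.le
        rw [hlv]; omega
      have hc2' : (ρ + lv + 1) * fB2 ≤ t * fB2 + (κv + 1) * ψb := by
        have hrsum : r + 1 = κv * t + ρ + lv + 1 := by rw [hlv]; ring
        have hψexp : (κv + 1) * ψ = κv * t * fB2 + t * fB2 + κv * ψb + ψb := by
          rw [hψ]; ring
        have h' : (r + 1) * fB2 = (κv * t + ρ + lv + 1) * fB2 := by rw [hrsum]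
        linarith [hc2, h', hψexp]
      have hlt : lv ≤ t := by
        have h' : lv * fB2 < (t + 1) * fB2 := by linarith [hc2', h2, hψb2]
        have := lt_of_mul_lt_mul_right h' hF.le
        omega
      have hlt1 : (κv + 1) * ψb < (ρ + 1) * fB2 → lv ≤ t - 1 := by
        intro hcc
        have h' : lv * fB2 < t * fB2 := by linarith [hc2', hcc]
        have := lt_of_mul_lt_mul_right h' hF.le
        omega
      refine ⟨⟨ρ, κv, lv⟩, ?_, ?_⟩
      · simp only [Set.mem_setOf_eq]
        refine ⟨hρ0, hρ1, (hκ_le ρ κv).2 h1, (hκ_ge (ρ + 1) κv).2 h2, hl0, ?_⟩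
        by_cases hcc : κv < κ (ρ + 1) - 1
        · rw [if_pos hcc]
          have := hlt1 ((hiff ρ κv).1 hcc)
          omega
        · rw [if_neg hcc]; omega
      · show κv * t + ρ + lv = r
        rw [hlv]; ring
  · -- the k-value formulas
    intro ρ κv lv hρ0 hρ1 h3 h4 hl0 h6
    have h1 : ρ * fB2 ≤ κv * ψb := (hκ_le ρ κv).1 h3
    have h2 : κv * ψb < (ρ + 1) * fB2 := (hκ_ge (ρ + 1) κv).1 h4
    obtain ⟨hlt, hlt1⟩ := hsplit ρ κv lv h6
    obtain ⟨w1, w2⟩ := winB ρ κv lv hρ0 hρ1 h1 h2 hl0 hlt hlt1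
    refine ⟨winA ρ κv lv hρ0 hρ1 h1 h2 hl0 hlt, ?_⟩
    have w1' : (κv + 1 - 1) * ψ < (κv * t + ρ + lv + 1) * fB2 := by linarith
    rw [hmk _ (κv + 1) w1' w2]
    ring
end
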